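/- arXiv:2411.09257 — 6 statements merged into one kernel-verified Lean document; each statement's English description precedes it below -/
import Mathlib

section
/- For all t ≥ 0 and all real u with |u| ≤ 1, the probability generating function of the IGCP satisfies Σ_{n=0}^∞ u^n p̂(n,t) = exp(−Σ_{j₀=1}^{k₀} μ_{j₀} t (1 − exp(−j₀ Σ_{j=1}^k λ_j (1 − u^j)))). -/
/-- State probabilities of a generalized counting process (GCP) with `k` kinds of jumps of
amplitudes `1, …, k` and rates `lam 0, …, lam (k-1)` (index `j : Fin k` encodes jump size `j+1`):
`p(n,t) = ∑_{Ω(k,n)} ∏_j ((λ_j t)^{x_j}/x_j!) e^{−λ_j t}`. -/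
noncomputable def gcpPmf (k : ℕ) (lam : Fin k → ℝ) (n : ℕ) (t : ℝ) : ℝ :=
  ∑' x : Fin k → ℕ,
    if (∑ j : Fin k, ((j : ℕ) + 1) * x j) = n then
      ∏ j : Fin k, (lam j * t) ^ (x j) / (Nat.factorial (x j)) * Real.exp (-(lam j * t))
    else 0

/-- State probabilities of the iterated generalized counting process (IGCP):
`p̂(n,t) = ∑_{s=0}^∞ p(n,s) p₀(s,t)`. -/
noncomputable def igcpPmf (k : ℕ) (lam : Fin k → ℝ) (k0 : ℕ) (mu : Fin k0 → ℝ)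
    (n : ℕ) (t : ℝ) : ℝ :=
  ∑' s : ℕ, gcpPmf k lam n s * gcpPmf k0 mu s t

/-!
Each GCP is a sum of independent Poisson processes, the `j`-th counting jumps of size `j`, so its
generating function factors into Poisson ones: `∑ₙ uⁿ p(n,s) = exp (s ∑ⱼ λⱼ (uʲ - 1)) = v ^ s` with
`v = exp (-∑ⱼ λⱼ (1 - uʲ))`. Summing the IGCP series over the inner time `s` first therefore turns it
into the generating function of the outer GCP at `v`, which is the claimed formula. The exchange of
the two sums is justified because all probabilities are nonnegative, so the same computation at
`|u|` bounds the double series.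
-/

open Finset

section FinPiProd

variable {R β : Type*} [NormedCommRing R]

theorem summable_norm_prod_fin_pi :
    ∀ {k : ℕ} {g : Fin k → β → R}, (∀ j, Summable fun m => ‖g j m‖) →
      Summable fun x : Fin k → β => ‖∏ j, g j (x j)‖
  | 0, _, _ => Summable.of_finite
  | k + 1, g, hg => by
    rw [← (Fin.consEquiv fun _ => β).summable_iff]
    simpa [Function.comp_def, Fin.consEquiv, Fin.prod_univ_succ] using
      (hg 0).mul_norm (summable_norm_prod_fin_pi fun j => hg j.succ)

theorem tsum_prod_fin_pi [CompleteSpace R] :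
    ∀ {k : ℕ} {g : Fin k → β → R}, (∀ j, Summable fun m => ‖g j m‖) →
      ∑' x : Fin k → β, ∏ j, g j (x j) = ∏ j, ∑' m, g j m
  | 0, _, _ => by simp
  | k + 1, g, hg => by
    rw [← (Fin.consEquiv fun _ => β).tsum_eq, Fin.prod_univ_succ,
      ← tsum_prod_fin_pi fun j => hg j.succ,
      tsum_mul_tsum_of_summable_norm (hg 0) (summable_norm_prod_fin_pi fun j => hg j.succ)]
    simp [Fin.consEquiv, Fin.prod_univ_succ]

end FinPiProd

theorem hasSum_tsum_ite_eq_of_summable {α E : Type*} [NormedAddCommGroup E] [CompleteSpace E]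
    {f : α → E} (hf : Summable f) (φ : α → ℕ) :
    HasSum (fun n => ∑' x, if φ x = n then f x else 0) (∑' x, f x) := by
  convert hf.hasSum.tsum_fiberwise φ using 2 with n
  simp only [_root_.tsum_subtype, Set.indicator, Set.mem_preimage, Set.mem_singleton_iff]

theorem gcpPmf_nonneg {k : ℕ} {lam : Fin k → ℝ} (hlam : ∀ j, 0 ≤ lam j) {t : ℝ} (ht : 0 ≤ t)
    (n : ℕ) : 0 ≤ gcpPmf k lam n t :=
  tsum_nonneg fun x => by
    split_ifs
    · exact prod_nonneg fun j _ => by have := hlam j; positivity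
    · rfl

theorem Real.hasSum_pow_div_factorial (c : ℝ) :
    HasSum (fun m : ℕ => c ^ m / m.factorial) (Real.exp c) :=
  Real.exp_eq_exp_ℝ ▸ NormedSpace.expSeries_div_hasSum_exp c

theorem hasSum_pow_mul_gcpPmf (k : ℕ) (lam : Fin k → ℝ) (t u : ℝ) :
    HasSum (fun n => u ^ n * gcpPmf k lam n t)
      (Real.exp (∑ j, lam j * t * (u ^ ((j : ℕ) + 1) - 1))) := by
  set g : Fin k → ℕ → ℝ := fun j m =>
    (lam j * t * u ^ ((j : ℕ) + 1)) ^ m / m.factorial * Real.exp (-(lam j * t))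
  have hg : ∀ j, Summable fun m => ‖g j m‖ := fun j =>
    summable_norm_iff.mpr ((Real.hasSum_pow_div_factorial _).mul_right _).summable
  -- on the fibre `∑ⱼ (j + 1) xⱼ = n`, `u ^ n = ∏ⱼ (u ^ (j + 1)) ^ xⱼ` is absorbed into the factors
  have hrow : ∀ n, u ^ n * gcpPmf k lam n t =
      ∑' x : Fin k → ℕ, if ∑ j : Fin k, ((j : ℕ) + 1) * x j = n then ∏ j, g j (x j) else 0 := by
    intro n
    rw [gcpPmf, ← tsum_mul_left]
    refine tsum_congr fun x => ?_
    split_ifs with hx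
    · rw [← hx, ← prod_pow_eq_pow_sum, ← prod_mul_distrib]
      refine prod_congr rfl fun j _ => ?_
      simp only [g, pow_mul, mul_pow]
      ring
    · rw [mul_zero]
  have hfactor : ∀ j, ∑' m, g j m = Real.exp (lam j * t * (u ^ ((j : ℕ) + 1) - 1)) := fun j => by
    rw [((Real.hasSum_pow_div_factorial _).mul_right _).tsum_eq, ← Real.exp_add]
    ring_nf
  rw [funext hrow, Real.exp_sum, ← prod_congr rfl fun j _ => hfactor j, ← tsum_prod_fin_pi hg]
  exact hasSum_tsum_ite_eq_of_summable (summable_norm_prod_fin_pi hg).of_norm _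

theorem hasSum_pow_mul_tsum_mul_of_hasSum_pow {P : ℕ → ℕ → ℝ} {Q : ℕ → ℝ} {F G : ℝ → ℝ}
    (hP : ∀ n s, 0 ≤ P n s) (hQ : ∀ s, 0 ≤ Q s)
    (hPF : ∀ u s, HasSum (fun n => u ^ n * P n s) (F u ^ s))
    (hQG : ∀ v, HasSum (fun s => v ^ s * Q s) (G v)) (u : ℝ) :
    HasSum (fun n => u ^ n * ∑' s, P n s * Q s) (G (F u)) := by
  set f : ℕ × ℕ → ℝ := fun q => u ^ q.2 * P q.2 q.1 * Q q.1
  -- absolute convergence of the double series is the same identity at `|u|`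
  have hf : Summable f := by
    refine Summable.of_norm ((summable_prod_of_nonneg fun _ => norm_nonneg _).2 ⟨fun s => ?_, ?_⟩)
    · simpa [f, abs_mul, abs_pow, abs_of_nonneg (hP _ _), abs_of_nonneg (hQ _)] using
        ((hPF |u| s).summable.mul_right (Q s))
    · simpa [f, abs_mul, abs_pow, abs_of_nonneg (hP _ _), abs_of_nonneg (hQ _), tsum_mul_right,
        (hPF |u| _).tsum_eq] using (hQG (F |u|)).summable
  have hrows : HasSum (fun s => F u ^ s * Q s) (∑' q, f q) :=
    hf.hasSum.prod_fiberwise fun s => by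
      simpa only [f, ← (hPF u s).tsum_eq, tsum_mul_right] using (hf.prod_factor s).hasSum
  have hf' : Summable (f ∘ Prod.swap) := (Equiv.prodComm ℕ ℕ).summable_iff.mpr hf
  have hcols : HasSum (fun n => u ^ n * ∑' s, P n s * Q s) (∑' q, f q) := by
    rw [← (Equiv.prodComm ℕ ℕ).tsum_eq]
    refine hf'.hasSum.prod_fiberwise fun n => ?_
    simpa only [f, Function.comp_apply, Prod.fst_swap, Prod.snd_swap, mul_assoc, tsum_mul_left]
      using (hf'.prod_factor n).hasSum
  rwa [hrows.unique (hQG (F u))] at hcols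

theorem igcp_pgf_general (k : ℕ) (lam : Fin k → ℝ) (hlam : ∀ j, 0 < lam j)
    (k0 : ℕ) (mu : Fin k0 → ℝ) (hmu : ∀ j0, 0 < mu j0)
    (t : ℝ) (ht : 0 ≤ t) (u : ℝ) :
    ∑' n : ℕ, u ^ n * igcpPmf k lam k0 mu n t =
      Real.exp (-(∑ j0 : Fin k0, mu j0 * t *
        (1 - Real.exp (-((((j0 : ℕ) + 1 : ℝ)) *
          ∑ j : Fin k, lam j * (1 - u ^ ((j : ℕ) + 1))))))) := by
  set F : ℝ → ℝ := fun w => Real.exp (-∑ j, lam j * (1 - w ^ ((j : ℕ) + 1)))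
  have hPF : ∀ w (s : ℕ), HasSum (fun n => w ^ n * gcpPmf k lam n s) (F w ^ s) := fun w s => by
    convert hasSum_pow_mul_gcpPmf k lam s w using 1
    rw [← Real.exp_nat_mul, ← sum_neg_distrib, mul_sum]
    exact congrArg Real.exp (sum_congr rfl fun j _ => by ring)
  have hIGCP := hasSum_pow_mul_tsum_mul_of_hasSum_pow
    (fun n s => gcpPmf_nonneg (fun j => (hlam j).le) s.cast_nonneg n)
    (gcpPmf_nonneg (fun j => (hmu j).le) ht) hPF (hasSum_pow_mul_gcpPmf k0 mu t) u
  rw [show ∑' n : ℕ, u ^ n * igcpPmf k lam k0 mu n t = _ from hIGCP.tsum_eq, ← sum_neg_distrib]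
  refine congrArg Real.exp (sum_congr rfl fun j0 _ => ?_)
  simp only [F]
  generalize ∑ j : Fin k, lam j * (1 - u ^ ((j : ℕ) + 1)) = a
  rw [← Real.exp_nat_mul, Nat.cast_succ, mul_neg]
  ring

/-- the probability generating function of the IGCP. -/
theorem igcp_pgf (k : ℕ) (hk : 0 < k) (lam : Fin k → ℝ) (hlam : ∀ j, 0 < lam j)
    (k0 : ℕ) (hk0 : 0 < k0) (mu : Fin k0 → ℝ) (hmu : ∀ j0, 0 < mu j0)
    (t : ℝ) (ht : 0 ≤ t) (u : ℝ) (hu : |u| ≤ 1) :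
    ∑' n : ℕ, u ^ n * igcpPmf k lam k0 mu n t =
      Real.exp (-(∑ j0 : Fin k0, mu j0 * t *
        (1 - Real.exp (-((((j0 : ℕ) + 1 : ℝ)) *
          ∑ j : Fin k, lam j * (1 - u ^ ((j : ℕ) + 1))))))) :=
  igcp_pgf_general k lam hlam k0 mu hmu t ht u
end

section
/- For every n ∈ ℕ₀ and t ≥ 0, p̂(n,t) = Σ_{(n₁,…,n_k)∈Ω(k,n)} (Π_{j=1}^k λ_j^{n_j}/n_j!) · Σ_{r₁+⋯+r_{k₀}=z_k} z_k! · Π_{j₀=1}^{k₀} (j₀^{r_{j₀}}/r_{j₀}!) e^{−μ_{j₀} t (1−e^{−j₀λ})} 𝓑_{r_{j₀}}(e^{−j₀λ} μ_{j₀} t), where z_k = n₁+⋯+n_k and the inner sum ranges over all (r₁,…,r_{k₀}) ∈ ℕ₀^{k₀} with r₁+⋯+r_{k₀} = z_k. -/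
/-- The `n`-th order Bell polynomial `𝓑_n(x) = e^{−x} ∑_{r=0}^∞ r^n x^r / r!`. -/
noncomputable def bellPoly (n : ℕ) (x : ℝ) : ℝ :=
  Real.exp (-x) * ∑' r : ℕ, (r : ℝ) ^ n * x ^ r / (Nat.factorial r)

open Finset
open scoped Nat

theorem Finset.sum_pow_eq_sum_piAntidiag_factorial {ι R : Type*} [DecidableEq ι] [Field R]
    [CharZero R] (s : Finset ι) (f : ι → R) (n : ℕ) :
    (∑ i ∈ s, f i) ^ n = ∑ r ∈ piAntidiag s n, (n ! : R) * ∏ i ∈ s, f i ^ r i / (r i)! := by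
  rw [sum_pow_eq_sum_piAntidiag]
  refine sum_congr rfl fun r hr => ?_
  have hfact : (∏ i ∈ s, ((r i)! : R)) ≠ 0 :=
    prod_ne_zero_iff.2 fun i _ => Nat.cast_ne_zero.2 (r i).factorial_ne_zero
  have hmult : (Nat.multinomial s r : R) = n ! / ∏ i ∈ s, ((r i)! : R) := by
    rw [eq_div_iff hfact, mul_comm, ← (mem_piAntidiag.1 hr).1]
    exact_mod_cast Nat.multinomial_spec s r
  rw [hmult, prod_div_distrib]
  ring

theorem tsum_ite_sum_eq_sum_piAntidiag {ι α : Type*} [Fintype ι] [DecidableEq ι]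
    [AddCommMonoid α] [TopologicalSpace α] (z : ℕ) (f : (ι → ℕ) → α) :
    ∑' r : ι → ℕ, (if ∑ i, r i = z then f r else 0) = ∑ r ∈ piAntidiag univ z, f r := by
  rw [tsum_eq_sum (s := piAntidiag univ z) fun r hr => if_neg fun h => hr (by simp [h])]
  exact sum_congr rfl fun r hr => if_pos (mem_piAntidiag.1 hr).1

theorem mem_piFinset_range_of_sum_succ_mul_eq {N n : ℕ} {x : Fin N → ℕ}
    (h : ∑ j : Fin N, ((j : ℕ) + 1) * x j = n) : x ∈ Fintype.piFinset fun _ => range (n + 1) := by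
  refine Fintype.mem_piFinset.2 fun j => mem_range_succ_iff.2 ?_
  calc x j ≤ ((j : ℕ) + 1) * x j := Nat.le_mul_of_pos_left _ j.succ_pos
    _ ≤ n := h ▸ single_le_sum (f := fun i : Fin N => ((i : ℕ) + 1) * x i) (by simp) (mem_univ j)

theorem tsum_ite_sum_succ_mul_eq_sum_piFinset {N : ℕ} {α : Type*} [AddCommMonoid α]
    [TopologicalSpace α] (n : ℕ) (f : (Fin N → ℕ) → α) :
    ∑' x : Fin N → ℕ, (if ∑ j : Fin N, ((j : ℕ) + 1) * x j = n then f x else 0) =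
      ∑ x ∈ Fintype.piFinset fun _ => range (n + 1),
        if ∑ j : Fin N, ((j : ℕ) + 1) * x j = n then f x else 0 :=
  tsum_eq_sum fun _ hx => if_neg fun h => hx (mem_piFinset_range_of_sum_succ_mul_eq h)

section FinPiProd

variable {R β : Type*} [NormedCommRing R]

theorem summable_norm_prod_fin_pi_s1 {N : ℕ} {f : Fin N → β → R}
    (hf : ∀ j, Summable fun b => ‖f j b‖) :
    Summable fun y : Fin N → β => ‖∏ j, f j (y j)‖ := by
  induction N with
  | zero => exact (hasSum_unique _).summable
  | succ N ih =>
    rw [← (Fin.consEquiv fun _ => β).summable_iff]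
    simpa [Function.comp_def, Fin.prod_univ_succ] using (hf 0).mul_norm (ih fun j => hf j.succ)

theorem hasSum_prod_fin_pi [CompleteSpace R] {N : ℕ} {f : Fin N → β → R} {a : Fin N → R}
    (hf : ∀ j, HasSum (f j) (a j)) (hf_norm : ∀ j, Summable fun b => ‖f j b‖) :
    HasSum (fun y : Fin N → β => ∏ j, f j (y j)) (∏ j, a j) := by
  induction N with
  | zero => simp [hasSum_unique]
  | succ N ih =>
    have htail := ih (f := fun j => f j.succ) (fun j => hf j.succ) fun j => hf_norm j.succ
    have hprod := (hf 0).mul htail <| ((hf_norm 0).mul_norm <|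
      summable_norm_prod_fin_pi_s1 (f := fun j => f j.succ) fun j => hf_norm j.succ).of_norm
    rw [← (Fin.consEquiv fun _ => β).hasSum_iff]
    simpa [Function.comp_def, Fin.prod_univ_succ] using hprod

end FinPiProd

theorem summable_pow_mul_pow_div_factorial (ρ : ℕ) (q : ℝ) :
    Summable fun m : ℕ => (m : ℝ) ^ ρ * q ^ m / m ! := by
  refine .of_norm_bounded ((Real.summable_pow_div_factorial (Real.exp 1 * |q|)).mul_left (ρ ! : ℝ))
    fun m => ?_
  have hpow : (m : ℝ) ^ ρ ≤ ρ ! * Real.exp m := by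
    have := Real.pow_div_factorial_le_exp _ (Nat.cast_nonneg m) ρ
    rwa [div_le_iff₀ (by positivity), mul_comm] at this
  calc ‖(m : ℝ) ^ ρ * q ^ m / (m !)‖ = (m : ℝ) ^ ρ * |q| ^ m / m ! := by simp
    _ ≤ ρ ! * Real.exp m * |q| ^ m / m ! := by gcongr
    _ = ρ ! * ((Real.exp 1 * |q|) ^ m / m !) := by
        rw [mul_pow, ← Real.exp_nat_mul, mul_one]; ring

theorem hasSum_pow_mul_pow_div_factorial (ρ : ℕ) (q : ℝ) :
    HasSum (fun m : ℕ => (m : ℝ) ^ ρ * q ^ m / m !) (Real.exp q * bellPoly ρ q) := by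
  refine (summable_pow_mul_pow_div_factorial ρ q).hasSum_iff.2 ?_
  rw [bellPoly, ← mul_assoc, ← Real.exp_add, add_neg_cancel, Real.exp_zero, one_mul]

theorem hasSum_pow_mul_poisson (a m t w : ℝ) (ρ : ℕ) :
    HasSum (fun y : ℕ => (a * y) ^ ρ / ρ ! * w ^ y * ((m * t) ^ y / y ! * Real.exp (-(m * t))))
      (a ^ ρ / ρ ! * Real.exp (-(m * t * (1 - w))) * bellPoly ρ (w * m * t)) := by
  have hexp : Real.exp (-(m * t * (1 - w))) = Real.exp (-(m * t)) * Real.exp (w * m * t) := by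
    rw [← Real.exp_add]; ring_nf
  have hvalue : a ^ ρ / ρ ! * Real.exp (-(m * t * (1 - w))) * bellPoly ρ (w * m * t) =
      a ^ ρ / ρ ! * Real.exp (-(m * t)) * (Real.exp (w * m * t) * bellPoly ρ (w * m * t)) := by
    rw [hexp]; ring
  rw [hvalue]
  exact ((hasSum_pow_mul_pow_div_factorial ρ (w * m * t)).mul_left _).congr_fun fun y => by ring

theorem summable_norm_pow_mul_poisson (a m t w : ℝ) (ρ : ℕ) :
    Summable fun y : ℕ =>
      ‖(a * y) ^ ρ / ρ ! * w ^ y * ((m * t) ^ y / y ! * Real.exp (-(m * t)))‖ := by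
  refine ((summable_pow_mul_pow_div_factorial ρ (|w| * |m * t|)).mul_left
    (|a| ^ ρ / ρ ! * Real.exp (-(m * t)))).congr fun y => ?_
  simp only [Real.norm_eq_abs, abs_mul, abs_div, abs_pow, Nat.abs_cast, Real.abs_exp]
  ring

theorem hasSum_mul_gcpPmf {N : ℕ} (c : Fin N → ℝ) (t : ℝ) {g : ℕ → ℝ} {a : ℝ}
    (h : HasSum (fun y : Fin N → ℕ => g (∑ j : Fin N, ((j : ℕ) + 1) * y j) *
      ∏ j, (c j * t) ^ y j / (y j)! * Real.exp (-(c j * t))) a) :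
    HasSum (fun s => g s * gcpPmf N c s t) a := by
  classical
  set F := fun y : Fin N → ℕ => g (∑ j : Fin N, ((j : ℕ) + 1) * y j) *
    ∏ j, (c j * t) ^ y j / (y j)! * Real.exp (-(c j * t))
  refine (h.tsum_fiberwise fun y => ∑ j : Fin N, ((j : ℕ) + 1) * y j).congr_fun fun s => ?_
  rw [_root_.tsum_subtype, gcpPmf, ← tsum_mul_left]
  refine tsum_congr fun y => ?_
  rw [Set.indicator_apply, Set.mem_preimage, Set.mem_singleton_iff]
  split_ifs with hy
  · rw [← hy]
  · rw [mul_zero]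

theorem pow_mul_exp_mul_prod_poisson_eq_sum {N : ℕ} (c : Fin N → ℝ) (t L : ℝ) (z : ℕ)
    (y : Fin N → ℕ) :
    ((∑ j : Fin N, ((j : ℕ) + 1) * y j : ℕ) : ℝ) ^ z *
        Real.exp (-(L * ((∑ j : Fin N, ((j : ℕ) + 1) * y j : ℕ) : ℝ))) *
        ∏ j, (c j * t) ^ y j / (y j)! * Real.exp (-(c j * t)) =
      ∑ r ∈ piAntidiag univ z, (z ! : ℝ) * ∏ j : Fin N,
        (((j : ℕ) + 1 : ℝ) * y j) ^ r j / (r j)! * Real.exp (-(((j : ℕ) + 1 : ℝ) * L)) ^ y j *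
          ((c j * t) ^ y j / (y j)! * Real.exp (-(c j * t))) := by
  have hcast : ((∑ j : Fin N, ((j : ℕ) + 1) * y j : ℕ) : ℝ) =
      ∑ j : Fin N, ((j : ℕ) + 1 : ℝ) * y j := by
    push_cast; rfl
  have hexp : Real.exp (-(L * ∑ j : Fin N, ((j : ℕ) + 1 : ℝ) * y j)) =
      ∏ j : Fin N, Real.exp (-(((j : ℕ) + 1 : ℝ) * L)) ^ y j := by
    rw [mul_sum, ← sum_neg_distrib, Real.exp_sum]
    refine prod_congr rfl fun j _ => ?_
    rw [← Real.exp_nat_mul]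
    ring_nf
  rw [hcast, hexp, sum_pow_eq_sum_piAntidiag_factorial, sum_mul, sum_mul]
  refine sum_congr rfl fun r _ => ?_
  simp only [prod_mul_distrib]
  ring

theorem hasSum_pow_mul_exp_mul_gcpPmf {N : ℕ} (c : Fin N → ℝ) (t L : ℝ) (z : ℕ) :
    HasSum (fun s : ℕ => (s : ℝ) ^ z * Real.exp (-(L * s)) * gcpPmf N c s t)
      (∑ r ∈ piAntidiag univ z, (z ! : ℝ) * ∏ j : Fin N,
        ((j : ℕ) + 1 : ℝ) ^ r j / (r j)! *
          Real.exp (-(c j * t * (1 - Real.exp (-(((j : ℕ) + 1 : ℝ) * L))))) *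
          bellPoly (r j) (Real.exp (-(((j : ℕ) + 1 : ℝ) * L)) * c j * t)) := by
  refine hasSum_mul_gcpPmf c t (g := fun s : ℕ => (s : ℝ) ^ z * Real.exp (-(L * s))) ?_
  have hfactor (r : Fin N → ℕ) (j : Fin N) :=
    hasSum_pow_mul_poisson ((j : ℕ) + 1) (c j) t (Real.exp (-(((j : ℕ) + 1 : ℝ) * L))) (r j)
  have hfactor_norm (r : Fin N → ℕ) (j : Fin N) :=
    summable_norm_pow_mul_poisson ((j : ℕ) + 1) (c j) t
      (Real.exp (-(((j : ℕ) + 1 : ℝ) * L))) (r j)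
  exact (hasSum_sum fun r _ => (hasSum_prod_fin_pi (hfactor r) (hfactor_norm r)).mul_left
    (z ! : ℝ)).congr_fun (pow_mul_exp_mul_prod_poisson_eq_sum c t L z)

theorem gcpPmf_eq_sum_piFinset {N : ℕ} (c : Fin N → ℝ) (n : ℕ) (s : ℝ) :
    gcpPmf N c n s = ∑ x ∈ Fintype.piFinset fun _ => range (n + 1),
      if ∑ j : Fin N, ((j : ℕ) + 1) * x j = n then
        (∏ j, c j ^ x j / (x j)!) * (s ^ (∑ j, x j) * Real.exp (-((∑ j, c j) * s)))
      else 0 := by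
  have hprod : ∀ x : Fin N → ℕ, ∏ j, (c j * s) ^ x j / (x j)! * Real.exp (-(c j * s)) =
      (∏ j, c j ^ x j / (x j)!) * (s ^ (∑ j, x j) * Real.exp (-((∑ j, c j) * s))) := by
    intro x
    rw [← prod_pow_eq_pow_sum, sum_mul, ← sum_neg_distrib, Real.exp_sum, ← prod_mul_distrib,
      ← prod_mul_distrib]
    exact prod_congr rfl fun j _ => by ring
  rw [gcpPmf, tsum_ite_sum_succ_mul_eq_sum_piFinset]
  exact sum_congr rfl fun x _ => by rw [hprod]

theorem igcp_pmf_bell_general (k : ℕ) (lam : Fin k → ℝ)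
    (k0 : ℕ) (mu : Fin k0 → ℝ)
    (n : ℕ) (t : ℝ) :
    igcpPmf k lam k0 mu n t =
      ∑' nv : Fin k → ℕ,
        if (∑ j : Fin k, ((j : ℕ) + 1) * nv j) = n then
          (∏ j : Fin k, lam j ^ (nv j) / (Nat.factorial (nv j))) *
            ∑' r : Fin k0 → ℕ,
              if (∑ j0 : Fin k0, r j0) = (∑ j : Fin k, nv j) then
                (Nat.factorial (∑ j : Fin k, nv j) : ℝ) *
                  ∏ j0 : Fin k0,
                    (((j0 : ℕ) + 1 : ℝ) ^ (r j0) / (Nat.factorial (r j0))) *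
                      Real.exp (-(mu j0 * t *
                        (1 - Real.exp (-(((j0 : ℕ) + 1 : ℝ) * ∑ j : Fin k, lam j))))) *
                      bellPoly (r j0)
                        (Real.exp (-(((j0 : ℕ) + 1 : ℝ) * ∑ j : Fin k, lam j)) * mu j0 * t)
              else 0
        else 0 := by
  have hterm : ∀ s : ℕ, gcpPmf k lam n s * gcpPmf k0 mu s t =
      ∑ x ∈ Fintype.piFinset fun _ => range (n + 1),
        if ∑ j : Fin k, ((j : ℕ) + 1) * x j = n then
          (∏ j, lam j ^ x j / (x j)!) *
            ((s : ℝ) ^ (∑ j, x j) * Real.exp (-((∑ j, lam j) * s)) * gcpPmf k0 mu s t)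
        else 0 := fun s => by
    rw [gcpPmf_eq_sum_piFinset, sum_mul]
    exact sum_congr rfl fun x _ => by split_ifs <;> ring
  rw [igcpPmf, tsum_ite_sum_succ_mul_eq_sum_piFinset]
  refine HasSum.tsum_eq (HasSum.congr_fun (hasSum_sum fun x _ => ?_) hterm)
  by_cases hx : ∑ j : Fin k, ((j : ℕ) + 1) * x j = n
  · simp only [hx, if_true, tsum_ite_sum_eq_sum_piAntidiag]
    exact (hasSum_pow_mul_exp_mul_gcpPmf mu t _ _).mul_left _
  · simp only [hx, if_false]
    exact hasSum_zero

/-- state probabilities of the IGCP in terms of Bell polynomials. -/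
theorem igcp_pmf_bell (k : ℕ) (hk : 0 < k) (lam : Fin k → ℝ) (hlam : ∀ j, 0 < lam j)
    (k0 : ℕ) (hk0 : 0 < k0) (mu : Fin k0 → ℝ) (hmu : ∀ j0, 0 < mu j0)
    (n : ℕ) (t : ℝ) (ht : 0 ≤ t) :
    igcpPmf k lam k0 mu n t =
      ∑' nv : Fin k → ℕ,
        if (∑ j : Fin k, ((j : ℕ) + 1) * nv j) = n then
          (∏ j : Fin k, lam j ^ (nv j) / (Nat.factorial (nv j))) *
            ∑' r : Fin k0 → ℕ,
              if (∑ j0 : Fin k0, r j0) = (∑ j : Fin k, nv j) then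
                (Nat.factorial (∑ j : Fin k, nv j) : ℝ) *
                  ∏ j0 : Fin k0,
                    (((j0 : ℕ) + 1 : ℝ) ^ (r j0) / (Nat.factorial (r j0))) *
                      Real.exp (-(mu j0 * t *
                        (1 - Real.exp (-(((j0 : ℕ) + 1 : ℝ) * ∑ j : Fin k, lam j))))) *
                      bellPoly (r j0)
                        (Real.exp (-(((j0 : ℕ) + 1 : ℝ) * ∑ j : Fin k, lam j)) * mu j0 * t)
              else 0
        else 0 :=
  igcp_pmf_bell_general k lam k0 mu n t
end

section
/- For every m ∈ ℕ₀, Pr{Σ_{n=1}^{N} X_n = m} = p̂(m,t); that is, the IGCP at time t is equal in distribution to the compound GCP Σ_{n=1}^{M₀(t)} X_n formed by summing an M₀(t)-indexed random number of i.i.d. copies of M(1). -/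
open MeasureTheory ProbabilityTheory

/-!
The GCP at time `t` is `∑ⱼ j • Yⱼ` with independent `Yⱼ ∼ Poisson(λⱼ t)`. Since Poisson laws
convolve by adding rates, coordinatewise, the GCP laws form a convolution semigroup in `t`.
Hence `X₁ + ⋯ + Xₛ` has the GCP law at time `s`, and splitting according to the value of the
independent index `N` gives `Pr{X₁ + ⋯ + X_N = m} = ∑ₛ p₀(s,t) p(m,s) = p̂(m,t)`.
-/

namespace MeasureTheory.Measure

theorem pi_conv_pi {ι M : Type*} [Fintype ι] [AddMonoid M] [MeasurableSpace M]
    [MeasurableAdd₂ M] (μ ν : ι → Measure M) [∀ i, IsFiniteMeasure (μ i)]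
    [∀ i, IsFiniteMeasure (ν i)] :
    Measure.pi μ ∗ Measure.pi ν = Measure.pi fun i ↦ μ i ∗ ν i := by
  rw [conv, ← (measurePreserving_arrowProdEquivProdArrow M M ι μ ν).map_eq,
    map_map (by fun_prop) (MeasurableEquiv.measurable _)]
  exact pi_map_pi (f := fun _ (p : M × M) ↦ p.1 + p.2) fun _ ↦ by fun_prop

theorem pi_dirac {ι : Type*} [Fintype ι] {α : ι → Type*} [∀ i, MeasurableSpace (α i)]
    (x : ∀ i, α i) : Measure.pi (fun i ↦ dirac (x i)) = dirac x := by
  refine pi_eq fun s hs ↦ ?_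
  simp only [dirac_apply' _ (MeasurableSet.univ_pi hs), dirac_apply' _ (hs _)]
  by_cases h : x ∈ Set.univ.pi s
  · simp_all
  · obtain ⟨i, hi⟩ : ∃ i, x i ∉ s i := by simpa using h
    rw [Set.indicator_of_notMem h, eq_comm]
    exact Finset.prod_eq_zero (Finset.mem_univ i) (Set.indicator_of_notMem hi _)

end MeasureTheory.Measure

theorem ProbabilityTheory.poissonMeasure_zero : poissonMeasure 0 = Measure.dirac 0 := by
  refine Measure.ext_iff_singleton.mpr fun n ↦ ?_
  rcases n with _ | n <;> simp [poissonMeasure_singleton]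

def jumpSum (k : ℕ) : (Fin k → ℕ) →+ ℕ where
  toFun x := ∑ j : Fin k, ((j : ℕ) + 1) * x j
  map_zero' := by simp
  map_add' x y := by simp [mul_add, Finset.sum_add_distrib]

theorem jumpSum_apply (k : ℕ) (x : Fin k → ℕ) :
    jumpSum k x = ∑ j : Fin k, ((j : ℕ) + 1) * x j := rfl

noncomputable def gcpMeasure (k : ℕ) (lam : Fin k → ℝ) (t : ℝ) : Measure ℕ :=
  (Measure.pi fun j ↦ poissonMeasure (lam j * t).toNNReal).map (jumpSum k)

section GcpMeasure

variable {k : ℕ} {lam : Fin k → ℝ} {t : ℝ}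

instance : IsProbabilityMeasure (gcpMeasure k lam t) :=
  Measure.isProbabilityMeasure_map (by fun_prop)

theorem gcpMeasure_real_singleton (hlam : ∀ j, 0 ≤ lam j) (ht : 0 ≤ t) (n : ℕ) :
    (gcpMeasure k lam t).real {n} = gcpPmf k lam n t := by
  rw [measureReal_def, gcpMeasure, Measure.map_apply (by fun_prop) (measurableSet_singleton n),
    ← Measure.tsum_indicator_apply_singleton _ _ (.of_discrete),
    ENNReal.tsum_toReal_eq fun x ↦ ne_top_of_le_ne_top (measure_ne_top _ {x})
      (Set.indicator_le_self _ _ x)]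
  refine tsum_congr fun x ↦ ?_
  simp only [Set.indicator, Set.mem_preimage, Set.mem_singleton_iff, jumpSum_apply]
  split_ifs
  · rw [Measure.pi_singleton, ENNReal.toReal_prod]
    refine Finset.prod_congr rfl fun j _ ↦ ?_
    rw [← measureReal_def, poissonMeasure_real_singleton,
      Real.coe_toNNReal _ (mul_nonneg (hlam j) ht)]
    ring
  · exact ENNReal.toReal_zero

theorem gcpMeasure_singleton (hlam : ∀ j, 0 ≤ lam j) (ht : 0 ≤ t) (n : ℕ) :
    gcpMeasure k lam t {n} = ENNReal.ofReal (gcpPmf k lam n t) := by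
  rw [← gcpMeasure_real_singleton hlam ht, ofReal_measureReal]

theorem gcpMeasure_zero : gcpMeasure k lam 0 = Measure.dirac 0 := by
  simp only [gcpMeasure, mul_zero, Real.toNNReal_zero, poissonMeasure_zero]
  rw [show Measure.pi (fun _ : Fin k ↦ Measure.dirac 0) = .dirac 0 from Measure.pi_dirac 0,
    Measure.map_dirac, map_zero]

theorem gcpMeasure_conv (hlam : ∀ j, 0 ≤ lam j) {s u : ℝ} (hs : 0 ≤ s) (hu : 0 ≤ u) :
    gcpMeasure k lam s ∗ gcpMeasure k lam u = gcpMeasure k lam (s + u) := by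
  rw [gcpMeasure, gcpMeasure, ← Measure.map_conv_addMonoidHom _ (by fun_prop),
    Measure.pi_conv_pi]
  simp_rw [poissonMeasure_conv_poissonMeasure, ← Real.toNNReal_add (mul_nonneg (hlam _) hs)
    (mul_nonneg (hlam _) hu), ← mul_add]
  rfl

theorem ofReal_igcpPmf {k0 : ℕ} {mu : Fin k0 → ℝ} (hlam : ∀ j, 0 ≤ lam j) (hmu : ∀ j, 0 ≤ mu j)
    (ht : 0 ≤ t) (m : ℕ) :
    ENNReal.ofReal (igcpPmf k lam k0 mu m t) =
      ∑' s : ℕ, gcpMeasure k0 mu t {s} * gcpMeasure k lam s {m} := by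
  have hfin : ∑' s : ℕ, gcpMeasure k0 mu t {s} * gcpMeasure k lam s {m} ≠ ⊤ := by
    refine ne_top_of_le_ne_top (measure_ne_top (gcpMeasure k0 mu t) Set.univ) ?_
    rw [← Measure.tsum_indicator_apply_singleton _ _ MeasurableSet.univ]
    simp only [Set.indicator_univ]
    exact ENNReal.tsum_le_tsum fun s ↦ mul_le_of_le_one_right' prob_le_one
  rw [igcpPmf, ← ENNReal.ofReal_toReal hfin, ENNReal.tsum_toReal_eq fun s ↦
    ENNReal.mul_ne_top (measure_ne_top _ _) (measure_ne_top _ _)]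
  congr 1
  refine tsum_congr fun s ↦ ?_
  rw [ENNReal.toReal_mul, ← measureReal_def, ← measureReal_def, mul_comm,
    gcpMeasure_real_singleton hlam s.cast_nonneg, gcpMeasure_real_singleton hmu ht]

end GcpMeasure

section RandomSums

variable {Ω : Type*} [MeasurableSpace Ω] {P : Measure Ω}

theorem measure_setOf_apply_index_mem_eq_tsum {β : Type*} [MeasurableSpace β]
    {S : ℕ → Ω → β} {N : Ω → ℕ} (hS : ∀ s, Measurable (S s)) (hN : Measurable N)
    (hindep : ∀ s, IndepFun N (S s) P) {A : Set β} (hA : MeasurableSet A) :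
    P {ω | S (N ω) ω ∈ A} = ∑' s, P (N ⁻¹' {s}) * P (S s ⁻¹' A) := by
  have hunion : {ω | S (N ω) ω ∈ A} = ⋃ s, N ⁻¹' {s} ∩ S s ⁻¹' A := by
    ext ω
    simp
  rw [hunion, measure_iUnion ((pairwise_disjoint_fiber N).mono fun _ _ h ↦
      h.mono Set.inter_subset_left Set.inter_subset_left)
    fun s ↦ (hN (measurableSet_singleton s)).inter (hS s hA)]
  exact tsum_congr fun s ↦
    (hindep s).measure_inter_preimage_eq_mul _ _ (measurableSet_singleton s) hA

theorem ProbabilityTheory.iIndepFun.indepFun_option_elim_sum_range {β : Type*}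
    [MeasurableSpace β] [AddCommMonoid β] [MeasurableAdd₂ β] {N : Ω → β} {X : ℕ → Ω → β}
    (h : iIndepFun (fun o : Option ℕ ↦ o.elim N X) P) (hN : Measurable N)
    (hX : ∀ n, Measurable (X n)) (s : ℕ) :
    IndepFun N (∑ n ∈ Finset.range s, X n) P := by
  have := h.indepFun_finsetSum_of_notMem (Option.rec hN hX)
    (s := (Finset.range s).map .some) (i := none) (by simp)
  rw [Finset.sum_map] at this
  exact this.symm

theorem hasLaw_sum_range_gcpMeasure [IsProbabilityMeasure P] {k : ℕ} {lam : Fin k → ℝ}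
    (hlam : ∀ j, 0 ≤ lam j) {X : ℕ → Ω → ℕ} (hX : ∀ n, Measurable (X n))
    (hindep : iIndepFun X P) (hlaw : ∀ n, HasLaw (X n) (gcpMeasure k lam 1) P) (s : ℕ) :
    HasLaw (∑ n ∈ Finset.range s, X n) (gcpMeasure k lam s) P := by
  induction s with
  | zero =>
    rw [Finset.sum_range_zero, Nat.cast_zero, gcpMeasure_zero]
    exact hasLaw_dirac_of_ae_eq (ae_of_all _ fun _ ↦ rfl)
  | succ s ih =>
    rw [Finset.sum_range_succ, Nat.cast_succ, ← gcpMeasure_conv hlam s.cast_nonneg zero_le_one]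
    exact IndepFun.hasLaw_add ih (hlaw s) (hindep.indepFun_finsetSum_of_notMem hX (by simp))

end RandomSums

theorem igcp_compound_rep_general {Ω : Type*} [MeasurableSpace Ω] (P : Measure Ω)
    [IsProbabilityMeasure P]
    (k : ℕ) (lam : Fin k → ℝ) (hlam : ∀ j, 0 < lam j)
    (k0 : ℕ) (mu : Fin k0 → ℝ) (hmu : ∀ j0, 0 < mu j0)
    (t : ℝ) (ht : 0 ≤ t)
    (X : ℕ → Ω → ℕ) (N : Ω → ℕ)
    (hXmeas : ∀ n, Measurable (X n)) (hNmeas : Measurable N)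
    (hXdist : ∀ n : ℕ, ∀ m : ℕ, P {ω | X n ω = m} = ENNReal.ofReal (gcpPmf k lam m 1))
    (hNdist : ∀ s : ℕ, P {ω | N ω = s} = ENNReal.ofReal (gcpPmf k0 mu s t))
    (hindep : iIndepFun
      (fun o : Option ℕ => o.elim N X) P) :
    ∀ m : ℕ, P {ω | (∑ n ∈ Finset.range (N ω), X n ω) = m} =
      ENNReal.ofReal (igcpPmf k lam k0 mu m t) := by
  intro m
  have hlam' : ∀ j, 0 ≤ lam j := fun j ↦ (hlam j).le
  have hmu' : ∀ j, 0 ≤ mu j := fun j ↦ (hmu j).le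
  have hlawX (n : ℕ) : HasLaw (X n) (gcpMeasure k lam 1) P :=
    ⟨(hXmeas n).aemeasurable, Measure.ext_iff_singleton.mpr fun m ↦ by
      rw [Measure.map_apply (hXmeas n) (measurableSet_singleton m),
        gcpMeasure_singleton hlam' zero_le_one]
      exact hXdist n m⟩
  have hlawS := hasLaw_sum_range_gcpMeasure hlam' hXmeas
    (hindep.precomp (g := some) (Option.some_injective ℕ)) hlawX
  have hSmeas (s : ℕ) : Measurable (∑ n ∈ Finset.range s, X n) := by fun_prop
  have hsum : {ω | (∑ n ∈ Finset.range (N ω), X n ω) = m} =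
      {ω | (∑ n ∈ Finset.range (N ω), X n) ω ∈ ({m} : Set ℕ)} := by
    simp only [Finset.sum_apply, Set.mem_singleton_iff]
  rw [hsum, measure_setOf_apply_index_mem_eq_tsum hSmeas hNmeas
    (hindep.indepFun_option_elim_sum_range hNmeas hXmeas) (measurableSet_singleton m),
    ofReal_igcpPmf hlam' hmu' ht]
  refine tsum_congr fun s ↦ ?_
  rw [← (hlawS s).map_eq, Measure.map_apply (hSmeas s) (measurableSet_singleton m),
    gcpMeasure_singleton hmu' ht]
  exact congrArg (· * _) (hNdist s)

/-- the IGCP at time `t` is equal in distribution to the compound GCP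
`∑_{n=1}^{N} X_n`, where the `X_n` are i.i.d. copies of `M(1)` and `N` is distributed
as the time-changing GCP at time `t`, independent of the sequence `(X_n)`. -/
theorem igcp_compound_rep {Ω : Type*} [MeasurableSpace Ω] (P : Measure Ω)
    [IsProbabilityMeasure P]
    (k : ℕ) (hk : 0 < k) (lam : Fin k → ℝ) (hlam : ∀ j, 0 < lam j)
    (k0 : ℕ) (hk0 : 0 < k0) (mu : Fin k0 → ℝ) (hmu : ∀ j0, 0 < mu j0)
    (t : ℝ) (ht : 0 ≤ t)
    (X : ℕ → Ω → ℕ) (N : Ω → ℕ)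
    (hXmeas : ∀ n, Measurable (X n)) (hNmeas : Measurable N)
    (hXdist : ∀ n : ℕ, ∀ m : ℕ, P {ω | X n ω = m} = ENNReal.ofReal (gcpPmf k lam m 1))
    (hNdist : ∀ s : ℕ, P {ω | N ω = s} = ENNReal.ofReal (gcpPmf k0 mu s t))
    (hindep : iIndepFun
      (fun o : Option ℕ => o.elim N X) P) :
    ∀ m : ℕ, P {ω | (∑ n ∈ Finset.range (N ω), X n ω) = m} =
      ENNReal.ofReal (igcpPmf k lam k0 mu m t) :=
  igcp_compound_rep_general P k lam hlam k0 mu hmu t ht X N hXmeas hNmeas hXdist hNdist hindep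
end

section
/- For every t ≥ 0, the mean of the IGCP satisfies Σ_{n=0}^∞ n·p̂(n,t) = S·t, and its variance satisfies Σ_{n=0}^∞ n²·p̂(n,t) − (S·t)² = T·t; in particular, for t > 0 the variance strictly exceeds the mean (the IGCP is overdispersed). -/
/-!
Given the inner time `s`, the GCP is the law of `∑ⱼ (j+1) Xⱼ` with independent `Xⱼ ~ Poisson(λⱼ s)`,
so its first two moments are `a s` and `(a s)² + c s`, where `a = ∑ⱼ (j+1) λⱼ` and
`c = ∑ⱼ (j+1)² λⱼ`. Averaging over `s` distributed as the outer GCP at time `t`, with moments `b t`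
and `(b t)² + d t`, gives the mean `a b t` and the second moment `a² ((b t)² + d t) + c b t`,
hence the variance `(a² d + c b) t`, which exceeds the mean because `c ≥ a` and `a² d > 0`.
The series are manipulated in `ℝ≥0∞`, where every interchange of summations is free, and only the
final moments are transferred to `ℝ`.
-/

open scoped ENNReal NNReal
open ProbabilityTheory MeasureTheory

namespace ProbabilityTheory

theorem tsum_poissonMeasure_singleton (r : ℝ≥0) : ∑' n, poissonMeasure r {n} = 1 := by
  simpa using (lintegral_countable' (μ := poissonMeasure r) 1).symm

theorem natCast_succ_mul_poissonMeasure_singleton (r : ℝ≥0) (n : ℕ) :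
    ((n + 1 : ℕ) : ℝ≥0∞) * poissonMeasure r {n + 1} = r * poissonMeasure r {n} := by
  rw [poissonMeasure_singleton, poissonMeasure_singleton, ← ENNReal.ofReal_natCast,
    ← ENNReal.ofReal_coe_nnreal, ← ENNReal.ofReal_mul (by positivity),
    ← ENNReal.ofReal_mul (by positivity)]
  congr 1
  rw [Nat.factorial_succ, pow_succ]
  push_cast
  field_simp

theorem tsum_natCast_mul_poissonMeasure_singleton (r : ℝ≥0) :
    ∑' n : ℕ, (n : ℝ≥0∞) * poissonMeasure r {n} = r := by
  rw [tsum_eq_zero_add' ENNReal.summable]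
  simp only [natCast_succ_mul_poissonMeasure_singleton, ENNReal.tsum_mul_left,
    tsum_poissonMeasure_singleton, Nat.cast_zero, zero_mul, mul_one, zero_add]

theorem tsum_natCast_sq_mul_poissonMeasure_singleton (r : ℝ≥0) :
    ∑' n : ℕ, (n : ℝ≥0∞) ^ 2 * poissonMeasure r {n} = (r : ℝ≥0∞) ^ 2 + r := by
  rw [tsum_eq_zero_add' ENNReal.summable]
  simp only [sq, mul_assoc, natCast_succ_mul_poissonMeasure_singleton]
  simp only [Nat.cast_succ, add_mul, one_mul, mul_left_comm _ (r : ℝ≥0∞), ENNReal.tsum_add,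
    ENNReal.tsum_mul_left, tsum_natCast_mul_poissonMeasure_singleton, tsum_poissonMeasure_singleton,
    Nat.cast_zero, zero_mul, mul_zero, zero_add]
  ring

end ProbabilityTheory

namespace ENNReal

section Independent

variable {α β : Type*} (p : α → ℝ≥0∞) (q : β → ℝ≥0∞) (X : α → ℝ≥0∞) (Y : β → ℝ≥0∞)

theorem tsum_tsum_mul_mul : ∑' a, ∑' b, p a * q b = (∑' a, p a) * ∑' b, q b := by
  simp only [ENNReal.tsum_mul_left, ENNReal.tsum_mul_right]

theorem tsum_tsum_add_mul_mul :
    ∑' a, ∑' b, (X a + Y b) * (p a * q b)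
      = (∑' a, X a * p a) * (∑' b, q b) + (∑' a, p a) * ∑' b, Y b * q b := by
  have (a : α) (b : β) : (X a + Y b) * (p a * q b) = X a * p a * q b + p a * (Y b * q b) := by
    ring
  simp only [this, ENNReal.tsum_add, ENNReal.tsum_mul_left, ENNReal.tsum_mul_right]

theorem tsum_tsum_add_sq_mul_mul :
    ∑' a, ∑' b, (X a + Y b) ^ 2 * (p a * q b)
      = (∑' a, X a ^ 2 * p a) * (∑' b, q b) + 2 * (∑' a, X a * p a) * (∑' b, Y b * q b)
        + (∑' a, p a) * ∑' b, Y b ^ 2 * q b := by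
  have (a : α) (b : β) : (X a + Y b) ^ 2 * (p a * q b)
      = X a ^ 2 * p a * q b + 2 * (X a * p a) * (Y b * q b) + p a * (Y b ^ 2 * q b) := by
    ring
  simp only [this, ENNReal.tsum_add, ENNReal.tsum_mul_left, ENNReal.tsum_mul_right]

end Independent

theorem tsum_pi_fin_succ {α : Type*} {k : ℕ} (f : (Fin (k + 1) → α) → ℝ≥0∞) :
    ∑' x, f x = ∑' a, ∑' y : Fin k → α, f (Fin.cons a y) := by
  rw [← (Fin.consEquiv fun _ => α).tsum_eq, ENNReal.tsum_prod']
  rfl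

section WeightedSum

variable {k : ℕ} (w : Fin k → ℝ≥0∞) (q : Fin k → ℕ → ℝ≥0∞)

theorem tsum_pi_prod_eq_one (hq : ∀ j, ∑' n, q j n = 1) :
    ∑' x : Fin k → ℕ, ∏ j, q j (x j) = 1 := by
  induction k with
  | zero => simp
  | succ k ih =>
    simp only [tsum_pi_fin_succ, Fin.prod_univ_succ, Fin.cons_zero, Fin.cons_succ,
      tsum_tsum_mul_mul, hq 0, ih _ fun j => hq j.succ, one_mul]

theorem tsum_pi_sum_mul_mul_prod (hq : ∀ j, ∑' n, q j n = 1) :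
    ∑' x : Fin k → ℕ, (∑ j, w j * x j) * ∏ j, q j (x j) = ∑ j, w j * ∑' n : ℕ, n * q j n := by
  induction k with
  | zero => simp
  | succ k ih =>
    simp only [tsum_pi_fin_succ, Fin.sum_univ_succ, Fin.prod_univ_succ, Fin.cons_zero,
      Fin.cons_succ, tsum_tsum_add_mul_mul, hq 0, tsum_pi_prod_eq_one _ fun j => hq j.succ,
      ih _ _ fun j => hq j.succ, mul_assoc, ENNReal.tsum_mul_left, mul_one, one_mul]

theorem tsum_pi_sum_mul_sq_mul_prod (m v : Fin k → ℝ≥0∞) (hq : ∀ j, ∑' n, q j n = 1)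
    (hm : ∀ j, ∑' n : ℕ, n * q j n = m j)
    (hv : ∀ j, ∑' n : ℕ, (n : ℝ≥0∞) ^ 2 * q j n = m j ^ 2 + v j) :
    ∑' x : Fin k → ℕ, (∑ j, w j * x j) ^ 2 * ∏ j, q j (x j)
      = (∑ j, w j * m j) ^ 2 + ∑ j, w j ^ 2 * v j := by
  induction k with
  | zero => simp
  | succ k ih =>
    simp only [tsum_pi_fin_succ, Fin.sum_univ_succ, Fin.prod_univ_succ, Fin.cons_zero,
      Fin.cons_succ, tsum_tsum_add_sq_mul_mul, hq 0, tsum_pi_prod_eq_one _ fun j => hq j.succ,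
      ih _ _ _ _ (fun j => hq j.succ) (fun j => hm j.succ) (fun j => hv j.succ),
      tsum_pi_sum_mul_mul_prod _ _ fun j => hq j.succ, hm, mul_pow, mul_assoc,
      ENNReal.tsum_mul_left, hv, mul_one, one_mul]
    ring

end WeightedSum

end ENNReal

noncomputable def weightedSumLaw {k : ℕ} (w : Fin k → ℕ) (q : Fin k → ℕ → ℝ≥0∞) (n : ℕ) : ℝ≥0∞ :=
  ∑' x : Fin k → ℕ, if ∑ j, w j * x j = n then ∏ j, q j (x j) else 0

section WeightedSumLaw

variable {k : ℕ} (w : Fin k → ℕ) (q : Fin k → ℕ → ℝ≥0∞)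

theorem tsum_mul_weightedSumLaw (F : ℕ → ℝ≥0∞) :
    ∑' n, F n * weightedSumLaw w q n = ∑' x : Fin k → ℕ, F (∑ j, w j * x j) * ∏ j, q j (x j) := by
  simp only [weightedSumLaw, ← ENNReal.tsum_mul_left, mul_ite, mul_zero]
  rw [ENNReal.tsum_comm]
  exact tsum_congr fun x => tsum_ite_eq' ..

theorem tsum_weightedSumLaw (hq : ∀ j, ∑' n, q j n = 1) : ∑' n, weightedSumLaw w q n = 1 := by
  simpa [ENNReal.tsum_pi_prod_eq_one q hq] using tsum_mul_weightedSumLaw w q 1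

theorem tsum_natCast_mul_weightedSumLaw (hq : ∀ j, ∑' n, q j n = 1) :
    ∑' n : ℕ, n * weightedSumLaw w q n = ∑ j, (w j : ℝ≥0∞) * ∑' n : ℕ, n * q j n := by
  rw [tsum_mul_weightedSumLaw w q Nat.cast, ← ENNReal.tsum_pi_sum_mul_mul_prod _ q hq]
  push_cast
  rfl

theorem tsum_natCast_sq_mul_weightedSumLaw (m v : Fin k → ℝ≥0∞) (hq : ∀ j, ∑' n, q j n = 1)
    (hm : ∀ j, ∑' n : ℕ, n * q j n = m j)
    (hv : ∀ j, ∑' n : ℕ, (n : ℝ≥0∞) ^ 2 * q j n = m j ^ 2 + v j) :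
    ∑' n : ℕ, (n : ℝ≥0∞) ^ 2 * weightedSumLaw w q n
      = (∑ j, (w j : ℝ≥0∞) * m j) ^ 2 + ∑ j, (w j : ℝ≥0∞) ^ 2 * v j := by
  rw [tsum_mul_weightedSumLaw w q (fun n => (n : ℝ≥0∞) ^ 2),
    ← ENNReal.tsum_pi_sum_mul_sq_mul_prod _ q m v hq hm hv]
  push_cast
  rfl

end WeightedSumLaw

noncomputable def gcpLaw (k : ℕ) (lam : Fin k → ℝ≥0) (t : ℝ≥0) : ℕ → ℝ≥0∞ :=
  weightedSumLaw (fun j => (j : ℕ) + 1) fun j n => poissonMeasure (lam j * t) {n}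

section GCP

variable {k : ℕ} (lam : Fin k → ℝ≥0) (t : ℝ≥0)

theorem gcpPmf_eq_toReal_gcpLaw (n : ℕ) :
    gcpPmf k (fun j => lam j) n t = (gcpLaw k lam t n).toReal := by
  rw [gcpLaw, weightedSumLaw, ENNReal.tsum_toReal_eq fun x => by
    split_ifs <;> simp [ENNReal.prod_ne_top, measure_ne_top]]
  refine tsum_congr fun x => ?_
  split_ifs
  · simp only [ENNReal.toReal_prod, ← measureReal_def, poissonMeasure_real_singleton]
    push_cast
    exact Finset.prod_congr rfl fun j _ => by ring
  · rfl

theorem tsum_gcpLaw : ∑' n, gcpLaw k lam t n = 1 :=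
  tsum_weightedSumLaw _ _ fun _ => tsum_poissonMeasure_singleton _

theorem gcpLaw_ne_top (n : ℕ) : gcpLaw k lam t n ≠ ⊤ :=
  ENNReal.ne_top_of_tsum_ne_top (by simp [tsum_gcpLaw]) n

theorem tsum_natCast_mul_gcpLaw :
    ∑' n : ℕ, n * gcpLaw k lam t n = (∑ j : Fin k, ((j : ℕ) + 1 : ℝ≥0∞) * lam j) * t := by
  rw [gcpLaw, tsum_natCast_mul_weightedSumLaw _ _ fun _ => tsum_poissonMeasure_singleton _,
    Finset.sum_mul]
  simp only [tsum_natCast_mul_poissonMeasure_singleton, ENNReal.coe_mul, mul_assoc]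
  push_cast
  rfl

theorem tsum_natCast_sq_mul_gcpLaw :
    ∑' n : ℕ, (n : ℝ≥0∞) ^ 2 * gcpLaw k lam t n
      = ((∑ j : Fin k, ((j : ℕ) + 1 : ℝ≥0∞) * lam j) * t) ^ 2
        + (∑ j : Fin k, ((j : ℕ) + 1 : ℝ≥0∞) ^ 2 * lam j) * t := by
  rw [gcpLaw, tsum_natCast_sq_mul_weightedSumLaw _ _ (fun j => (lam j * t : ℝ≥0))
    (fun j => (lam j * t : ℝ≥0)) (fun _ => tsum_poissonMeasure_singleton _)
    (fun _ => tsum_natCast_mul_poissonMeasure_singleton _)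
    (fun _ => tsum_natCast_sq_mul_poissonMeasure_singleton _), Finset.sum_mul, Finset.sum_mul]
  simp only [ENNReal.coe_mul, mul_assoc]
  push_cast
  rfl

end GCP

noncomputable def igcpLaw (k : ℕ) (lam : Fin k → ℝ≥0) (k0 : ℕ) (mu : Fin k0 → ℝ≥0) (t : ℝ≥0)
    (n : ℕ) : ℝ≥0∞ :=
  ∑' s : ℕ, gcpLaw k lam s n * gcpLaw k0 mu t s

section IGCP

variable {k k0 : ℕ} (lam : Fin k → ℝ≥0) (mu : Fin k0 → ℝ≥0) (t : ℝ≥0)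

theorem tsum_mul_igcpLaw (F : ℕ → ℝ≥0∞) :
    ∑' n, F n * igcpLaw k lam k0 mu t n
      = ∑' s : ℕ, (∑' n, F n * gcpLaw k lam s n) * gcpLaw k0 mu t s := by
  simp only [igcpLaw, ← ENNReal.tsum_mul_left, ← ENNReal.tsum_mul_right, mul_assoc]
  exact ENNReal.tsum_comm

theorem tsum_igcpLaw : ∑' n, igcpLaw k lam k0 mu t n = 1 := by
  simpa [tsum_gcpLaw] using tsum_mul_igcpLaw lam mu t 1

theorem igcpLaw_ne_top (n : ℕ) : igcpLaw k lam k0 mu t n ≠ ⊤ :=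
  ENNReal.ne_top_of_tsum_ne_top (by simp [tsum_igcpLaw]) n

theorem tsum_natCast_mul_igcpLaw :
    ∑' n : ℕ, n * igcpLaw k lam k0 mu t n
      = (∑ j : Fin k, ((j : ℕ) + 1 : ℝ≥0∞) * lam j)
        * ((∑ j0 : Fin k0, ((j0 : ℕ) + 1 : ℝ≥0∞) * mu j0) * t) := by
  simp only [tsum_mul_igcpLaw, tsum_natCast_mul_gcpLaw, ENNReal.coe_natCast, mul_assoc,
    ENNReal.tsum_mul_left, tsum_natCast_mul_gcpLaw]

theorem tsum_natCast_sq_mul_igcpLaw :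
    ∑' n : ℕ, (n : ℝ≥0∞) ^ 2 * igcpLaw k lam k0 mu t n
      = (∑ j : Fin k, ((j : ℕ) + 1 : ℝ≥0∞) * lam j) ^ 2
          * (((∑ j0 : Fin k0, ((j0 : ℕ) + 1 : ℝ≥0∞) * mu j0) * t) ^ 2
            + (∑ j0 : Fin k0, ((j0 : ℕ) + 1 : ℝ≥0∞) ^ 2 * mu j0) * t)
        + (∑ j : Fin k, ((j : ℕ) + 1 : ℝ≥0∞) ^ 2 * lam j)
          * ((∑ j0 : Fin k0, ((j0 : ℕ) + 1 : ℝ≥0∞) * mu j0) * t) := by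
  simp only [tsum_mul_igcpLaw, tsum_natCast_sq_mul_gcpLaw, ENNReal.coe_natCast, mul_pow, add_mul,
    mul_assoc, ENNReal.tsum_add, ENNReal.tsum_mul_left, tsum_natCast_sq_mul_gcpLaw,
    tsum_natCast_mul_gcpLaw]

theorem igcpPmf_eq_toReal_igcpLaw (n : ℕ) :
    igcpPmf k (fun j => lam j) k0 (fun j0 => mu j0) n t = (igcpLaw k lam k0 mu t n).toReal := by
  rw [igcpPmf, igcpLaw, ENNReal.tsum_toReal_eq fun s : ℕ =>
    ENNReal.mul_ne_top (gcpLaw_ne_top lam s n) (gcpLaw_ne_top mu t s)]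
  refine tsum_congr fun s => ?_
  have h := gcpPmf_eq_toReal_gcpLaw lam s n
  rw [NNReal.coe_natCast] at h
  rw [ENNReal.toReal_mul, h, gcpPmf_eq_toReal_gcpLaw]

theorem tsum_natCast_mul_igcpPmf :
    ∑' n : ℕ, (n : ℝ) * igcpPmf k (fun j => lam j) k0 (fun j0 => mu j0) n t
      = (∑ j : Fin k, ((j : ℕ) + 1 : ℝ) * lam j)
        * ((∑ j0 : Fin k0, ((j0 : ℕ) + 1 : ℝ) * mu j0) * t) := by
  have hfin (n : ℕ) : (n : ℝ≥0∞) * igcpLaw k lam k0 mu t n ≠ ⊤ :=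
    ENNReal.mul_ne_top (ENNReal.natCast_ne_top n) (igcpLaw_ne_top lam mu t n)
  simp_rw [igcpPmf_eq_toReal_igcpLaw, ← ENNReal.toReal_natCast, ← ENNReal.toReal_mul]
  rw [← ENNReal.tsum_toReal_eq hfin, tsum_natCast_mul_igcpLaw]
  norm_cast

theorem tsum_natCast_sq_mul_igcpPmf :
    ∑' n : ℕ, (n : ℝ) ^ 2 * igcpPmf k (fun j => lam j) k0 (fun j0 => mu j0) n t
      = (∑ j : Fin k, ((j : ℕ) + 1 : ℝ) * lam j) ^ 2
          * (((∑ j0 : Fin k0, ((j0 : ℕ) + 1 : ℝ) * mu j0) * t) ^ 2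
            + (∑ j0 : Fin k0, ((j0 : ℕ) + 1 : ℝ) ^ 2 * mu j0) * t)
        + (∑ j : Fin k, ((j : ℕ) + 1 : ℝ) ^ 2 * lam j)
          * ((∑ j0 : Fin k0, ((j0 : ℕ) + 1 : ℝ) * mu j0) * t) := by
  have hfin (n : ℕ) : (n : ℝ≥0∞) ^ 2 * igcpLaw k lam k0 mu t n ≠ ⊤ :=
    ENNReal.mul_ne_top (ENNReal.pow_ne_top (ENNReal.natCast_ne_top n)) (igcpLaw_ne_top lam mu t n)
  simp_rw [igcpPmf_eq_toReal_igcpLaw, ← ENNReal.toReal_natCast, ← ENNReal.toReal_pow,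
    ← ENNReal.toReal_mul]
  rw [← ENNReal.tsum_toReal_eq hfin, tsum_natCast_sq_mul_igcpLaw]
  norm_cast

end IGCP

/-- mean `S·t` and variance `T·t` of the IGCP, and overdispersion. -/
theorem igcp_mean_var (k : ℕ) (hk : 0 < k) (lam : Fin k → ℝ) (hlam : ∀ j, 0 < lam j)
    (k0 : ℕ) (hk0 : 0 < k0) (mu : Fin k0 → ℝ) (hmu : ∀ j0, 0 < mu j0)
    (S T : ℝ)
    (hS : S = (∑ j : Fin k, ((j : ℕ) + 1 : ℝ) * lam j) *
      (∑ j0 : Fin k0, ((j0 : ℕ) + 1 : ℝ) * mu j0))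
    (hT : T = (∑ j : Fin k, ((j : ℕ) + 1 : ℝ) * lam j) ^ 2 *
        (∑ j0 : Fin k0, ((j0 : ℕ) + 1 : ℝ) ^ 2 * mu j0) +
      (∑ j : Fin k, ((j : ℕ) + 1 : ℝ) ^ 2 * lam j) *
        (∑ j0 : Fin k0, ((j0 : ℕ) + 1 : ℝ) * mu j0))
    (t : ℝ) (ht : 0 ≤ t) :
    (∑' n : ℕ, (n : ℝ) * igcpPmf k lam k0 mu n t = S * t) ∧
    (∑' n : ℕ, (n : ℝ) ^ 2 * igcpPmf k lam k0 mu n t - (S * t) ^ 2 = T * t) ∧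
    (0 < t →
      S * t < ∑' n : ℕ, (n : ℝ) ^ 2 * igcpPmf k lam k0 mu n t - (S * t) ^ 2) := by
  lift lam to Fin k → ℝ≥0 using fun j => (hlam j).le
  lift mu to Fin k0 → ℝ≥0 using fun j0 => (hmu j0).le
  lift t to ℝ≥0 using ht
  have hmean := tsum_natCast_mul_igcpPmf lam mu t
  have hsq := tsum_natCast_sq_mul_igcpPmf lam mu t
  set A := ∑ j : Fin k, ((j : ℕ) + 1 : ℝ) * lam j
  set B := ∑ j0 : Fin k0, ((j0 : ℕ) + 1 : ℝ) * mu j0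
  set C := ∑ j : Fin k, ((j : ℕ) + 1 : ℝ) ^ 2 * lam j
  set D := ∑ j0 : Fin k0, ((j0 : ℕ) + 1 : ℝ) ^ 2 * mu j0
  refine ⟨by rw [hmean, hS]; ring, by rw [hsq, hS, hT]; ring, fun htpos => ?_⟩
  have hA : 0 < A :=
    Finset.sum_pos (fun j _ => mul_pos (by positivity) (hlam j)) ⟨⟨0, hk⟩, Finset.mem_univ _⟩
  have hD : 0 < D :=
    Finset.sum_pos (fun j0 _ => mul_pos (by positivity) (hmu j0)) ⟨⟨0, hk0⟩, Finset.mem_univ _⟩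
  have hAC : A ≤ C := Finset.sum_le_sum fun j _ => mul_le_mul_of_nonneg_right
    (le_self_pow₀ (le_add_of_nonneg_left (Nat.cast_nonneg _)) two_ne_zero) (hlam j).le
  have hB : 0 ≤ B := by positivity
  rw [hsq, hS]
  nlinarith [mul_pos (mul_pos (pow_pos hA 2) hD) htpos, mul_le_mul_of_nonneg_right hAC hB]
end

section
/- For every t > 0, the Riemann–Liouville fractional integral X^α(t) satisfies E[X^α(t)] = S·t^{α+1}/Γ(α+2) and Var(X^α(t)) = T·t^{2α+1}/((2α+1)·Γ(α+1)²). -/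
/-!
On `(0, t]` the second moment `E[M(s)²] = T s + S² s²` is bounded, so `(t - s)^(α-1) M(s, ω)`
is integrable on `(0, t] × Ω` and so is the product of two such factors on `(0, t]² × Ω`.
Fubini then moves the expectation inside the fractional integral: `E X^α(t)` is
`Γ(α)⁻¹ ∫ (t - s)^(α-1) S s ds`, and `Var X^α(t)` is
`Γ(α)⁻² ∬ (t - s)^(α-1) (t - w)^(α-1) T min(s, w) ds dw`, because the covariance of `M` is
`T min(s, w)`. Splitting at `w = s` and writing `w = t - (t - w)` turns both into integrals of
powers of `t - s`.
-/

open MeasureTheory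

/-- The Riemann–Liouville fractional integral of a process `M`:
`X^α(t)(ω) = (1/Γ(α)) ∫₀ᵗ (t−s)^{α−1} M(s)(ω) ds`. -/
noncomputable def fracInt {Ω : Type*} (α : ℝ) (M : ℝ → Ω → ℝ) (t : ℝ) (ω : Ω) : ℝ :=
  (1 / Real.Gamma α) * ∫ s in (0:ℝ)..t, (t - s) ^ (α - 1) * M s ω

open Set

lemma intervalIntegrable_sub_rpow {β : ℝ} (hβ : -1 < β) (t a b : ℝ) :
    IntervalIntegrable (fun s => (t - s) ^ β) volume a b := by
  simpa using
    (intervalIntegral.intervalIntegrable_rpow' (a := t - a) (b := t - b) hβ).comp_sub_left t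

lemma integral_sub_rpow {β : ℝ} (hβ : -1 < β) (t a b : ℝ) :
    ∫ s in a..b, (t - s) ^ β = ((t - a) ^ (β + 1) - (t - b) ^ (β + 1)) / (β + 1) := by
  rw [intervalIntegral.integral_comp_sub_left (fun x => x ^ β) t, integral_rpow (Or.inl hβ)]

section Kernel

variable {α t : ℝ}

lemma integral_sub_rpow_sub_one_tail (hα : 0 < α) (a : ℝ) :
    ∫ w in a..t, (t - w) ^ (α - 1) = (t - a) ^ α / α := by
  rw [integral_sub_rpow (by linarith) t a t, sub_self, sub_add_cancel, Real.zero_rpow hα.ne',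
    sub_zero]

lemma integral_sub_rpow_sub_one_mul_id (hα : 0 < α) {u : ℝ} (hu : 0 ≤ u) (hut : u ≤ t) :
    ∫ w in (0:ℝ)..u, (t - w) ^ (α - 1) * w
      = t * ((t ^ α - (t - u) ^ α) / α) - (t ^ (α + 1) - (t - u) ^ (α + 1)) / (α + 1) := by
  have hsplit : EqOn (fun w => (t - w) ^ (α - 1) * w)
      (fun w => t * (t - w) ^ (α - 1) - (t - w) ^ α) (uIcc 0 u) := by
    intro w hw
    rw [uIcc_of_le hu] at hw
    have hpow := Real.rpow_add_one' (x := t - w) (y := α - 1) (by linarith [hw.2])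
      (by linarith)
    rw [sub_add_cancel] at hpow
    simp only [hpow]
    ring
  have hii := intervalIntegrable_sub_rpow (β := α - 1) (by linarith) t 0 u
  rw [intervalIntegral.integral_congr hsplit, intervalIntegral.integral_sub (hii.const_mul t)
      (intervalIntegrable_sub_rpow (by linarith) t 0 u), intervalIntegral.integral_const_mul,
    integral_sub_rpow (by linarith) t 0 u, integral_sub_rpow (by linarith) t 0 u,
    sub_add_cancel, sub_zero]

lemma integral_sub_rpow_sub_one_mul_id_self (hα : 0 < α) (ht : 0 ≤ t) :
    ∫ w in (0:ℝ)..t, (t - w) ^ (α - 1) * w = t ^ (α + 1) / (α * (α + 1)) := by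
  rw [integral_sub_rpow_sub_one_mul_id hα ht le_rfl, sub_self, Real.zero_rpow hα.ne',
    Real.zero_rpow (by positivity), Real.rpow_add_one' ht (by positivity)]
  field_simp
  ring

lemma integral_sub_rpow_sub_one_mul_min (hα : 0 < α) {s : ℝ} (hs : 0 ≤ s) (hst : s ≤ t) :
    ∫ w in (0:ℝ)..t, (t - w) ^ (α - 1) * min s w
      = (t ^ (α + 1) - (t - s) ^ (α + 1)) / (α * (α + 1)) := by
  have hii (a b : ℝ) : IntervalIntegrable (fun w => (t - w) ^ (α - 1) * min s w) volume a b :=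
    (intervalIntegrable_sub_rpow (by linarith) t a b).mul_continuousOn
      (continuous_const.min continuous_id).continuousOn
  have hhead : ∫ w in (0:ℝ)..s, (t - w) ^ (α - 1) * min s w
      = ∫ w in (0:ℝ)..s, (t - w) ^ (α - 1) * w := by
    refine intervalIntegral.integral_congr fun w hw => ?_
    rw [uIcc_of_le hs] at hw
    simp only [min_eq_right hw.2]
  have htail : ∫ w in s..t, (t - w) ^ (α - 1) * min s w
      = (∫ w in s..t, (t - w) ^ (α - 1)) * s := by
    rw [← intervalIntegral.integral_mul_const]
    refine intervalIntegral.integral_congr fun w hw => ?_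
    rw [uIcc_of_le hst] at hw
    simp only [min_eq_left hw.1]
  rw [← intervalIntegral.integral_add_adjacent_intervals (hii 0 s) (hii s t), hhead, htail,
    integral_sub_rpow_sub_one_mul_id hα hs hst, integral_sub_rpow_sub_one_tail hα s,
    Real.rpow_add_one' (hs.trans hst) (by positivity),
    Real.rpow_add_one' (sub_nonneg.2 hst) (by positivity)]
  field_simp
  ring

lemma integral_sub_rpow_sub_one_mul_sub_rpow (hα : 0 < α) (ht : 0 ≤ t) :
    ∫ s in (0:ℝ)..t, (t - s) ^ (α - 1) * (t ^ (α + 1) - (t - s) ^ (α + 1))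
      = t ^ (2 * α + 1) * (α + 1) / (α * (2 * α + 1)) := by
  have hsplit : EqOn (fun s => (t - s) ^ (α - 1) * (t ^ (α + 1) - (t - s) ^ (α + 1)))
      (fun s => t ^ (α + 1) * (t - s) ^ (α - 1) - (t - s) ^ (2 * α)) (uIcc 0 t) := by
    intro s hs
    rw [uIcc_of_le ht] at hs
    have hpow := Real.rpow_add' (x := t - s) (y := α - 1) (z := α + 1) (by linarith [hs.2])
      (by linarith)
    rw [show α - 1 + (α + 1) = 2 * α by ring] at hpow
    simp only [hpow]
    ring
  rw [intervalIntegral.integral_congr hsplit,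
    intervalIntegral.integral_sub
      ((intervalIntegrable_sub_rpow (by linarith) t 0 t).const_mul _)
      (intervalIntegrable_sub_rpow (by linarith) t 0 t),
    intervalIntegral.integral_const_mul, integral_sub_rpow (by linarith) t 0 t,
    integral_sub_rpow (by linarith) t 0 t, sub_add_cancel, sub_self, sub_zero,
    Real.zero_rpow hα.ne', Real.zero_rpow (by positivity), sub_zero, sub_zero, mul_div_assoc',
    ← Real.rpow_add' ht (by positivity), show α + 1 + α = 2 * α + 1 by ring]
  field_simp
  ring

lemma integral_prod_sub_rpow_mul_min (hα : 0 < α) (ht : 0 ≤ t) :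
    ∫ z, (t - z.1) ^ (α - 1) * (t - z.2) ^ (α - 1) * min z.1 z.2
      ∂((volume.restrict (Ioc 0 t)).prod (volume.restrict (Ioc 0 t)))
      = t ^ (2 * α + 1) / (α ^ 2 * (2 * α + 1)) := by
  set μ := volume.restrict (Ioc (0:ℝ) t)
  have hk : Integrable (fun s => (t - s) ^ (α - 1)) μ :=
    (intervalIntegrable_sub_rpow (by linarith) t 0 t).1
  have hmem : ∀ᵐ s ∂μ, s ∈ Ioc 0 t := ae_restrict_mem measurableSet_Ioc
  have hint : Integrable (fun z : ℝ × ℝ => (t - z.1) ^ (α - 1) * (t - z.2) ^ (α - 1) * min z.1 z.2)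
      (μ.prod μ) := by
    refine (hk.mul_prod hk).mul_bdd (c := t)
      (continuous_fst.min continuous_snd).aestronglyMeasurable ?_
    filter_upwards [Measure.quasiMeasurePreserving_fst.ae hmem,
      Measure.quasiMeasurePreserving_snd.ae hmem] with z h1 h2
    rw [Real.norm_eq_abs, abs_of_pos (lt_min h1.1 h2.1)]
    exact min_le_of_left_le h1.2
  have hinner : EqOn (fun s => ∫ w, (t - s) ^ (α - 1) * (t - w) ^ (α - 1) * min s w ∂μ)
      (fun s => (t - s) ^ (α - 1) * (t ^ (α + 1) - (t - s) ^ (α + 1)) / (α * (α + 1)))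
      (Ioc 0 t) := by
    intro s hs
    simp only [mul_assoc]
    rw [integral_const_mul, ← intervalIntegral.integral_of_le ht,
      integral_sub_rpow_sub_one_mul_min hα hs.1.le hs.2, mul_div_assoc]
  rw [integral_prod _ hint, setIntegral_congr_fun measurableSet_Ioc hinner,
    ← intervalIntegral.integral_of_le ht, intervalIntegral.integral_div,
    integral_sub_rpow_sub_one_mul_sub_rpow hα ht]
  field_simp

end Kernel

section Fubini

variable {ι Ω : Type*} [MeasurableSpace ι] [MeasurableSpace Ω] {ν : Measure ι} {P : Measure Ω}
  [SFinite P] {K : ι → ℝ} {N : ι → Ω → ℝ}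

lemma integrable_prod_mul_of_integral_abs_le (hK : Integrable K ν)
    (hN : AEStronglyMeasurable (Function.uncurry N) (ν.prod P)) {C : ℝ}
    (hNC : ∀ᵐ i ∂ν, Integrable (N i) P ∧ ∫ ω, |N i ω| ∂P ≤ C) :
    Integrable (fun p : ι × Ω => K p.1 * N p.1 p.2) (ν.prod P) := by
  have hmeas : AEStronglyMeasurable (fun p : ι × Ω => K p.1 * N p.1 p.2) (ν.prod P) :=
    (hK.1.comp_fst (ν := P)).mul hN
  rw [integrable_prod_iff hmeas]
  refine ⟨hNC.mono fun i hi => hi.1.const_mul (K i),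
    (hK.norm.mul_const C).mono' hmeas.norm.integral_prod_right' ?_⟩
  filter_upwards [hNC] with i hi
  simp only [norm_mul, Real.norm_eq_abs, integral_const_mul, abs_abs]
  rw [abs_of_nonneg (integral_nonneg fun ω => abs_nonneg (N i ω))]
  exact mul_le_mul_of_nonneg_left hi.2 (abs_nonneg _)

lemma integral_integral_mul_swap [SFinite ν]
    (h : Integrable (fun p : ι × Ω => K p.1 * N p.1 p.2) (ν.prod P)) :
    ∫ ω, ∫ i, K i * N i ω ∂ν ∂P = ∫ i, K i * ∫ ω, N i ω ∂P ∂ν := by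
  simp_rw [← integral_const_mul]
  exact (integral_integral_swap (f := fun i ω => K i * N i ω) h).symm

end Fubini

lemma integral_abs_mul_le {Ω : Type*} [MeasurableSpace Ω] {P : Measure Ω} {f g : Ω → ℝ}
    (hf : MemLp f 2 P) (hg : MemLp g 2 P) :
    ∫ ω, |f ω * g ω| ∂P ≤ (∫ ω, f ω ^ 2 ∂P + ∫ ω, g ω ^ 2 ∂P) / 2 := by
  rw [← integral_add hf.integrable_sq hg.integrable_sq, ← integral_div]
  refine integral_mono (hf.integrable_mul hg).abs
    ((hf.integrable_sq.add hg.integrable_sq).div_const 2) fun ω => ?_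
  have := two_mul_le_add_sq |f ω| |g ω|
  simp only [abs_mul, sq_abs] at this ⊢
  linarith

section SquareIntegrableProcess

variable {Ω : Type*} [MeasurableSpace Ω] {P : Measure Ω} [IsProbabilityMeasure P]
  {M : ℝ → Ω → ℝ} {μ : Measure ℝ} {k : ℝ → ℝ} {C : ℝ}

lemma integrable_prod_mul_process (hM : Measurable (Function.uncurry M)) (hk : Integrable k μ)
    (hM2 : ∀ᵐ s ∂μ, MemLp (M s) 2 P ∧ ∫ ω, M s ω ^ 2 ∂P ≤ C) :
    Integrable (fun p : ℝ × Ω => k p.1 * M p.1 p.2) (μ.prod P) := by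
  refine integrable_prod_mul_of_integral_abs_le hk hM.aestronglyMeasurable
    (C := (C + 1) / 2) (hM2.mono fun s hs => ⟨hs.1.integrable one_le_two, ?_⟩)
  calc ∫ ω, |M s ω| ∂P = ∫ ω, |M s ω * 1| ∂P := by simp_rw [mul_one]
    _ ≤ (∫ ω, M s ω ^ 2 ∂P + ∫ _, (1 : ℝ) ^ 2 ∂P) / 2 := integral_abs_mul_le hs.1 (memLp_const 1)
    _ ≤ (C + 1) / 2 := by rw [one_pow, integral_const, probReal_univ, one_smul]; linarith [hs.2]

lemma integrable_prod_mul_process_mul (hM : Measurable (Function.uncurry M))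
    (hk : Integrable k μ) (hM2 : ∀ᵐ s ∂μ, MemLp (M s) 2 P ∧ ∫ ω, M s ω ^ 2 ∂P ≤ C) :
    Integrable (fun p : (ℝ × ℝ) × Ω => (k p.1.1 * k p.1.2) * (M p.1.1 p.2 * M p.1.2 p.2))
      ((μ.prod μ).prod P) := by
  have hMM : Measurable fun p : (ℝ × ℝ) × Ω => M p.1.1 p.2 * M p.1.2 p.2 :=
    (hM.comp (measurable_fst.fst.prodMk measurable_snd)).mul
      (hM.comp (measurable_fst.snd.prodMk measurable_snd))
  refine integrable_prod_mul_of_integral_abs_le (N := fun (z : ℝ × ℝ) ω => M z.1 ω * M z.2 ω)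
    (C := C) (hk.mul_prod hk) hMM.aestronglyMeasurable ?_
  filter_upwards [Measure.quasiMeasurePreserving_fst.ae hM2,
    Measure.quasiMeasurePreserving_snd.ae hM2] with z h1 h2
  refine ⟨h1.1.integrable_mul h2.1, (integral_abs_mul_le h1.1 h2.1).trans ?_⟩
  linarith [h1.2, h2.2]

lemma integral_integral_mul_process [SFinite μ] (hM : Measurable (Function.uncurry M))
    (hk : Integrable k μ) (hM2 : ∀ᵐ s ∂μ, MemLp (M s) 2 P ∧ ∫ ω, M s ω ^ 2 ∂P ≤ C) :
    ∫ ω, ∫ s, k s * M s ω ∂μ ∂P = ∫ s, k s * ∫ ω, M s ω ∂P ∂μ :=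
  integral_integral_mul_swap (integrable_prod_mul_process hM hk hM2)

lemma integral_sq_sub_sq_integral_mul_process [SFinite μ] (hM : Measurable (Function.uncurry M))
    (hk : Integrable k μ) (hM2 : ∀ᵐ s ∂μ, MemLp (M s) 2 P ∧ ∫ ω, M s ω ^ 2 ∂P ≤ C) :
    ∫ ω, (∫ s, k s * M s ω ∂μ) ^ 2 ∂P - (∫ ω, ∫ s, k s * M s ω ∂μ ∂P) ^ 2
      = ∫ z, k z.1 * k z.2 * (∫ ω, M z.1 ω * M z.2 ω ∂P - (∫ ω, M z.1 ω ∂P) * ∫ ω, M z.2 ω ∂P)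
          ∂(μ.prod μ) := by
  have h1 := integrable_prod_mul_process hM hk hM2
  have h2 := integrable_prod_mul_process_mul hM hk hM2
  have hsq (ω : Ω) : (∫ s, k s * M s ω ∂μ) ^ 2
      = ∫ z, (k z.1 * k z.2) * (M z.1 ω * M z.2 ω) ∂(μ.prod μ) := by
    rw [sq, ← integral_prod_mul]
    congr 1 with z
    ring
  have hmean : (∫ ω, ∫ s, k s * M s ω ∂μ ∂P) ^ 2
      = ∫ z, (k z.1 * ∫ ω, M z.1 ω ∂P) * (k z.2 * ∫ ω, M z.2 ω ∂P) ∂(μ.prod μ) := by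
    rw [integral_integral_mul_swap h1, sq]
    exact (integral_prod_mul (fun s => k s * ∫ ω, M s ω ∂P) _).symm
  have hmean_int : Integrable (fun s => k s * ∫ ω, M s ω ∂P) μ := by
    simpa only [integral_const_mul] using h1.integral_prod_left
  have hsecond_int : Integrable (fun z => k z.1 * k z.2 * ∫ ω, M z.1 ω * M z.2 ω ∂P)
      (μ.prod μ) := by
    simpa only [integral_const_mul] using h2.integral_prod_left
  simp_rw [hsq]
  rw [integral_integral_mul_swap h2, hmean,
    ← integral_sub hsecond_int (hmean_int.mul_prod hmean_int)]
  congr 1 with z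
  ring

end SquareIntegrableProcess

section DriftedBrownianMoments

variable {Ω : Type*} [MeasurableSpace Ω] {P : Measure Ω} {M : ℝ → Ω → ℝ} {S T α t : ℝ}

lemma ae_restrict_memLp_two_and_integral_sq_le (hM : Measurable (Function.uncurry M))
    (hT : 0 < T)
    (hsec : ∀ s w : ℝ, 0 ≤ s → 0 ≤ w → ∫ ω, M s ω * M w ω ∂P = T * min s w + S ^ 2 * s * w) :
    ∀ᵐ s ∂(volume.restrict (Ioc 0 t)),
      MemLp (M s) 2 P ∧ ∫ ω, M s ω ^ 2 ∂P ≤ T * t + S ^ 2 * t ^ 2 := by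
  filter_upwards [ae_restrict_mem measurableSet_Ioc] with s ⟨hs0, hst⟩
  have hsq : ∫ ω, M s ω ^ 2 ∂P = T * s + S ^ 2 * s ^ 2 := by
    simp only [sq, hsec s s hs0.le hs0.le, min_self]
    ring
  -- a non-integrable function would have Bochner integral `0`
  have hint : Integrable (fun ω => M s ω ^ 2) P :=
    Integrable.of_integral_ne_zero (by rw [hsq]; positivity)
  have hMs : Measurable (M s) := hM.comp measurable_prodMk_left
  refine ⟨(memLp_two_iff_integrable_sq hMs.aestronglyMeasurable).2 hint, ?_⟩
  rw [hsq]
  gcongr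

variable [IsProbabilityMeasure P]

lemma integral_integral_sub_rpow_mul_process (hα : 0 < α) (ht : 0 ≤ t)
    (hM : Measurable (Function.uncurry M)) (hT : 0 < T)
    (hmean : ∀ s : ℝ, 0 ≤ s → ∫ ω, M s ω ∂P = S * s)
    (hsec : ∀ s w : ℝ, 0 ≤ s → 0 ≤ w → ∫ ω, M s ω * M w ω ∂P = T * min s w + S ^ 2 * s * w) :
    ∫ ω, (∫ s in Ioc 0 t, (t - s) ^ (α - 1) * M s ω) ∂P = S * (t ^ (α + 1) / (α * (α + 1))) := by
  rw [integral_integral_mul_process hM (intervalIntegrable_sub_rpow (by linarith) t 0 t).1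
      (ae_restrict_memLp_two_and_integral_sq_le hM hT hsec),
    ← integral_sub_rpow_sub_one_mul_id_self hα ht, intervalIntegral.integral_of_le ht,
    ← integral_const_mul]
  refine setIntegral_congr_fun measurableSet_Ioc fun s hs => ?_
  simp only [hmean s hs.1.le]
  ring

lemma integral_sq_sub_sq_integral_sub_rpow_mul_process (hα : 0 < α) (ht : 0 ≤ t)
    (hM : Measurable (Function.uncurry M)) (hT : 0 < T)
    (hmean : ∀ s : ℝ, 0 ≤ s → ∫ ω, M s ω ∂P = S * s)
    (hsec : ∀ s w : ℝ, 0 ≤ s → 0 ≤ w → ∫ ω, M s ω * M w ω ∂P = T * min s w + S ^ 2 * s * w) :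
    ∫ ω, (∫ s in Ioc 0 t, (t - s) ^ (α - 1) * M s ω) ^ 2 ∂P
        - (∫ ω, (∫ s in Ioc 0 t, (t - s) ^ (α - 1) * M s ω) ∂P) ^ 2
      = T * (t ^ (2 * α + 1) / (α ^ 2 * (2 * α + 1))) := by
  have hmem : ∀ᵐ s ∂(volume.restrict (Ioc 0 t)), s ∈ Ioc 0 t :=
    ae_restrict_mem measurableSet_Ioc
  rw [integral_sq_sub_sq_integral_mul_process hM
      (intervalIntegrable_sub_rpow (by linarith) t 0 t).1
      (ae_restrict_memLp_two_and_integral_sq_le hM hT hsec),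
    ← integral_prod_sub_rpow_mul_min hα ht, ← integral_const_mul]
  refine integral_congr_ae ?_
  filter_upwards [Measure.quasiMeasurePreserving_fst.ae hmem,
    Measure.quasiMeasurePreserving_snd.ae hmem] with z h1 h2
  simp only [hsec _ _ h1.1.le h2.1.le, hmean _ h1.1.le, hmean _ h2.1.le]
  ring

end DriftedBrownianMoments

theorem fracInt_mean_var_general
    {Ω : Type*} [MeasurableSpace Ω] (P : Measure Ω) [IsProbabilityMeasure P]
    (S T α : ℝ) (hT : 0 < T) (hα : 0 < α)
    (M : ℝ → Ω → ℝ) (hjm : Measurable (Function.uncurry M))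
    (hmean : ∀ s : ℝ, 0 ≤ s → ∫ ω, M s ω ∂P = S * s)
    (hsec : ∀ s w : ℝ, 0 ≤ s → 0 ≤ w →
      ∫ ω, M s ω * M w ω ∂P = T * min s w + S ^ 2 * s * w)
    (t : ℝ) (ht : 0 < t) :
    (∫ ω, fracInt α M t ω ∂P = S * t ^ (α + 1) / Real.Gamma (α + 2)) ∧
    (∫ ω, (fracInt α M t ω) ^ 2 ∂P - (∫ ω, fracInt α M t ω ∂P) ^ 2 =
      T * t ^ (2 * α + 1) / ((2 * α + 1) * (Real.Gamma (α + 1)) ^ 2)) := by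
  have hX : fracInt α M t
      = fun ω => (Real.Gamma α)⁻¹ * ∫ s in Ioc 0 t, (t - s) ^ (α - 1) * M s ω := by
    ext ω
    rw [fracInt, intervalIntegral.integral_of_le ht.le, one_div]
  have hΓ : Real.Gamma (α + 1) = α * Real.Gamma α := Real.Gamma_add_one hα.ne'
  have hΓ2 : Real.Gamma (α + 2) = (α + 1) * (α * Real.Gamma α) := by
    rw [show α + 2 = α + 1 + 1 by ring, Real.Gamma_add_one (by positivity), hΓ]
  have hΓpos := Real.Gamma_pos_of_pos hα
  constructor
  · rw [hX, integral_const_mul,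
      integral_integral_sub_rpow_mul_process hα ht.le hjm hT hmean hsec, hΓ2]
    field_simp
  · simp only [hX, mul_pow, integral_const_mul]
    rw [← mul_sub, integral_sq_sub_sq_integral_sub_rpow_mul_process hα ht.le hjm hT hmean hsec,
      hΓ]
    field_simp

/-- mean and variance of the Riemann–Liouville fractional integral of a
process with mean `S·s` and second mixed moment `T·min(s,w) + S²·s·w`. -/
theorem fracInt_mean_var
    {Ω : Type*} [MeasurableSpace Ω] (P : Measure Ω) [IsProbabilityMeasure P]
    (S T α : ℝ) (hS : 0 < S) (hT : 0 < T) (hα : 0 < α)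
    (M : ℝ → Ω → ℝ) (hjm : Measurable (Function.uncurry M))
    (hmean : ∀ s : ℝ, 0 ≤ s → ∫ ω, M s ω ∂P = S * s)
    (hsec : ∀ s w : ℝ, 0 ≤ s → 0 ≤ w →
      ∫ ω, M s ω * M w ω ∂P = T * min s w + S ^ 2 * s * w)
    (hint1 : ∀ t : ℝ, 0 < t →
      Integrable (fun ω => ∫ s in (0:ℝ)..t, (t - s) ^ (α - 1) * |M s ω|) P)
    (hint2 : ∀ t : ℝ, 0 < t →
      Integrable (fun ω => (∫ s in (0:ℝ)..t, (t - s) ^ (α - 1) * |M s ω|) ^ 2) P)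
    (t : ℝ) (ht : 0 < t) :
    (∫ ω, fracInt α M t ω ∂P = S * t ^ (α + 1) / Real.Gamma (α + 2)) ∧
    (∫ ω, (fracInt α M t ω) ^ 2 ∂P - (∫ ω, fracInt α M t ω ∂P) ^ 2 =
      T * t ^ (2 * α + 1) / ((2 * α + 1) * (Real.Gamma (α + 1)) ^ 2)) :=
  fracInt_mean_var_general P S T α hT hα M hjm hmean hsec t ht
end

section
/- For all ω ∈ ℝ, t ≥ 0 and 1 ≤ i, l ≤ q with i ≠ l, Σ_{m=0}^∞ p₀(m,t)·(Σ_{a=0}^∞ e^{ω a} p_i(a,m))·(Σ_{b=0}^∞ e^{−ω b} p_l(b,m)) = exp(−Σ_{j₀=1}^{k₀} μ_{j₀} t (1 − exp(Σ_{j_i=1}^{k_i} j₀ λ_{ij_i}(e^{ω j_i} − 1) + Σ_{j_l=1}^{k_l} j₀ λ_{lj_l}(e^{−ω j_l} − 1)))); this is the joint exponential moment E[exp(ω(M_i(M₀(t)) − M_l(M₀(t))))] of two distinct components of the multivariate IGCP. -/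
/-!
Conditionally on `M₀(t) = m`, the two components are independent GCPs run for time `m`, and a
GCP is a finite sum of independent scaled Poisson variables `(j+1)·X_j`, `X_j ∼ Poisson(λ_j m)`.
Hence its exponential moment factors into Poisson moments, `E[e^{c M(m)}] = e^{m ψ(c)}` with
`ψ(c) = ∑ λ_j (e^{c(j+1)} - 1)`, and averaging `e^{m(ψ_i(ω) + ψ_l(-ω))}` over `M₀(t)` is once
more an exponential moment of a GCP, evaluated by the same formula.
-/

open Real

theorem hasSum_exp_mul_poisson (a c : ℝ) :
    HasSum (fun m : ℕ => exp (c * m) * (a ^ m / m.factorial * exp (-a)))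
      (exp (a * (exp c - 1))) := by
  have h := (NormedSpace.expSeries_div_hasSum_exp (a * exp c)).mul_left (exp (-a))
  rw [← Real.exp_eq_exp_ℝ, ← Real.exp_add] at h
  have hterm : (fun m : ℕ => exp (c * m) * (a ^ m / m.factorial * exp (-a))) =
      fun m : ℕ => exp (-a) * ((a * exp c) ^ m / m.factorial) := by
    funext m
    rw [mul_pow, mul_comm c, Real.exp_nat_mul]
    ring
  rw [hterm, show a * (exp c - 1) = -a + a * exp c by ring]
  exact h

theorem hasSum_pi_prod_of_nonneg {β : Type*} {k : ℕ} {f : Fin k → β → ℝ} {a : Fin k → ℝ}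
    (hf_nonneg : ∀ j, 0 ≤ f j) (hf : ∀ j, HasSum (f j) (a j)) :
    HasSum (fun x : Fin k → β => ∏ j, f j (x j)) (∏ j, a j) := by
  induction k with
  | zero =>
    simpa only [Finset.univ_eq_empty, Finset.prod_empty] using
      hasSum_unique (fun _ : Fin 0 → β => (1 : ℝ))
  | succ k ih =>
    have htail := ih (fun j => hf_nonneg j.succ) (fun j => hf j.succ)
    have htail_nonneg : 0 ≤ fun x : Fin k → β => ∏ j, f j.succ (x j) :=
      fun x => Finset.prod_nonneg fun j _ => hf_nonneg j.succ (x j)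
    have hs := (hf 0).summable.mul_of_nonneg htail.summable (hf_nonneg 0) htail_nonneg
    have hpair := HasSum.mul (f := f 0) (g := fun x : Fin k → β => ∏ j : Fin k, f j.succ (x j))
      (hf 0) htail hs
    have hcons : (fun x : Fin (k + 1) → β => ∏ j, f j (x j)) ∘ Fin.consEquiv (fun _ => β) =
        fun p => f 0 p.1 * ∏ j : Fin k, f j.succ (p.2 j) := by
      funext p
      simp [Fin.consEquiv, Fin.prod_univ_succ]
    rw [Fin.prod_univ_succ, ← (Fin.consEquiv fun _ => β).hasSum_iff, hcons]
    exact hpair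

theorem hasSum_exp_mul_gcpPmf (k : ℕ) (lam : Fin k → ℝ) (t : ℝ) (hlam : ∀ j, 0 ≤ lam j * t)
    (c : ℝ) :
    HasSum (fun n : ℕ => exp (c * n) * gcpPmf k lam n t)
      (exp (∑ j, lam j * t * (exp (c * ((j : ℕ) + 1)) - 1))) := by
  set size : (Fin k → ℕ) → ℕ := fun x => ∑ j : Fin k, ((j : ℕ) + 1) * x j
  set weight : Fin k → ℕ → ℝ := fun j m =>
    exp (c * ((j : ℕ) + 1) * m) * ((lam j * t) ^ m / m.factorial * exp (-(lam j * t)))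
  have hprod : HasSum (fun x : Fin k → ℕ => ∏ j, weight j (x j))
      (exp (∑ j, lam j * t * (exp (c * ((j : ℕ) + 1)) - 1))) := by
    rw [Real.exp_sum]
    exact hasSum_pi_prod_of_nonneg (fun j m => mul_nonneg (exp_pos _).le (by have := hlam j; positivity))
      (fun j => hasSum_exp_mul_poisson _ _)
  -- Grouping the configurations `x` by their total size `n` recovers `gcpPmf`.
  suffices hfiber : ∀ n : ℕ,
      exp (c * n) * gcpPmf k lam n t = ∑' x : size ⁻¹' {n}, ∏ j, weight j (x.1 j) by
    simpa only [hfiber] using hprod.tsum_fiberwise size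
  intro n
  rw [tsum_subtype (size ⁻¹' {n}) (fun x => ∏ j, weight j (x j)), gcpPmf, ← tsum_mul_left]
  refine tsum_congr fun x => ?_
  by_cases hx : size x = n
  · have hexp : exp (c * n) = ∏ j : Fin k, exp (c * ((j : ℕ) + 1) * x j) := by
      rw [← Real.exp_sum, ← hx, Nat.cast_sum, Finset.mul_sum]
      push_cast
      simp only [mul_assoc]
    rw [if_pos hx, Set.indicator_of_mem (show x ∈ size ⁻¹' {n} from hx), hexp,
      ← Finset.prod_mul_distrib]
  · rw [if_neg hx, Set.indicator_of_notMem (show x ∉ size ⁻¹' {n} from hx), mul_zero]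

theorem tsum_exp_mul_gcpPmf (k : ℕ) (lam : Fin k → ℝ) (t : ℝ) (hlam : ∀ j, 0 ≤ lam j * t)
    (c : ℝ) :
    ∑' n : ℕ, exp (c * n) * gcpPmf k lam n t =
      exp (∑ j, lam j * t * (exp (c * ((j : ℕ) + 1)) - 1)) :=
  (hasSum_exp_mul_gcpPmf k lam t hlam c).tsum_eq

theorem tsum_exp_mul_gcpPmf_natCast (k : ℕ) (lam : Fin k → ℝ) (hlam : ∀ j, 0 ≤ lam j) (c : ℝ)
    (m : ℕ) :
    ∑' n : ℕ, exp (c * n) * gcpPmf k lam n m =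
      exp ((∑ j, lam j * (exp (c * ((j : ℕ) + 1)) - 1)) * m) := by
  rw [tsum_exp_mul_gcpPmf k lam m (fun j => mul_nonneg (hlam j) m.cast_nonneg), Finset.sum_mul]
  congr 1
  exact Finset.sum_congr rfl fun j _ => by ring

theorem mvIgcp_exp_moment_general (q : ℕ) (K : Fin q → ℕ)
    (L : (i : Fin q) → Fin (K i) → ℝ) (hL : ∀ i j, 0 < L i j)
    (k0 : ℕ) (mu : Fin k0 → ℝ) (hmu : ∀ j0, 0 < mu j0)
    (ω : ℝ) (t : ℝ) (ht : 0 ≤ t) (i l : Fin q) :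
    ∑' m : ℕ, gcpPmf k0 mu m t *
        ((∑' a : ℕ, Real.exp (ω * a) * gcpPmf (K i) (L i) a m) *
          (∑' b : ℕ, Real.exp (-(ω * b)) * gcpPmf (K l) (L l) b m)) =
      Real.exp (-(∑ j0 : Fin k0, mu j0 * t *
        (1 - Real.exp
          ((∑ ji : Fin (K i), ((j0 : ℕ) + 1 : ℝ) * L i ji *
              (Real.exp (ω * ((ji : ℕ) + 1)) - 1)) +
            ∑ jl : Fin (K l), ((j0 : ℕ) + 1 : ℝ) * L l jl *
              (Real.exp (-(ω * ((jl : ℕ) + 1))) - 1))))) := by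
  set ψi := ∑ ji, L i ji * (exp (ω * ((ji : ℕ) + 1)) - 1)
  set ψl := ∑ jl, L l jl * (exp (-ω * ((jl : ℕ) + 1)) - 1)
  have hinner (m : ℕ) :
      (∑' a : ℕ, exp (ω * a) * gcpPmf (K i) (L i) a m) *
        (∑' b : ℕ, exp (-(ω * b)) * gcpPmf (K l) (L l) b m) = exp ((ψi + ψl) * m) := by
    simp only [← neg_mul]
    rw [tsum_exp_mul_gcpPmf_natCast _ _ (fun j => (hL i j).le),
      tsum_exp_mul_gcpPmf_natCast _ _ (fun j => (hL l j).le), ← Real.exp_add, add_mul]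
  simp only [hinner, mul_comm (gcpPmf k0 mu _ t)]
  rw [tsum_exp_mul_gcpPmf k0 mu t (fun j => mul_nonneg (hmu j).le ht), ← Finset.sum_neg_distrib]
  congr 1
  refine Finset.sum_congr rfl fun j0 _ => ?_
  rw [add_mul, Finset.sum_mul, Finset.sum_mul]
  simp only [mul_comm _ ((j0 : ℕ) + 1 : ℝ), mul_assoc, neg_mul]
  ring

/-- the joint exponential moment
`E[exp(ω(M_i(M₀(t)) − M_l(M₀(t))))]` of two distinct components of the multivariate
IGCP. -/
theorem mvIgcp_exp_moment (q : ℕ) (hq : 0 < q) (K : Fin q → ℕ) (hK : ∀ i, 0 < K i)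
    (L : (i : Fin q) → Fin (K i) → ℝ) (hL : ∀ i j, 0 < L i j)
    (k0 : ℕ) (hk0 : 0 < k0) (mu : Fin k0 → ℝ) (hmu : ∀ j0, 0 < mu j0)
    (ω : ℝ) (t : ℝ) (ht : 0 ≤ t) (i l : Fin q) (hil : i ≠ l) :
    ∑' m : ℕ, gcpPmf k0 mu m t *
        ((∑' a : ℕ, Real.exp (ω * a) * gcpPmf (K i) (L i) a m) *
          (∑' b : ℕ, Real.exp (-(ω * b)) * gcpPmf (K l) (L l) b m)) =
      Real.exp (-(∑ j0 : Fin k0, mu j0 * t *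
        (1 - Real.exp
          ((∑ ji : Fin (K i), ((j0 : ℕ) + 1 : ℝ) * L i ji *
              (Real.exp (ω * ((ji : ℕ) + 1)) - 1)) +
            ∑ jl : Fin (K l), ((j0 : ℕ) + 1 : ℝ) * L l jl *
              (Real.exp (-(ω * ((jl : ℕ) + 1))) - 1))))) :=
  mvIgcp_exp_moment_general q K L hL k0 mu hmu ω t ht i l
end
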